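/- Let T be an indecomposable tournament, X ⊆ V(T) with |X| ≥ 3 and T[X] indecomposable, and suppose T is T[X]-critical. Then Ext(X) = ∅, and for every u ∈ X the subtournaments T[X(u) ∪ {u}] and T[⟨X⟩ ∪ {u}] are transitive. (This is the 'only if' direction, assertions 1 and 2, of the characterization of partially critical tournaments.) -/
import Mathlib


/-- `A` is the arc relation of a tournament on the whole type. -/
def IsTournament {V : Type*} (A : V → V → Prop) : Prop :=
  (∀ x, ¬ A x x) ∧ ∀ x y : V, x ≠ y → (A x y ↔ ¬ A y x)

/-- `I` is an interval of the subtournament induced on `X`. -/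
def IsIntervalOn {V : Type*} (A : V → V → Prop) (X I : Set V) : Prop :=
  I ⊆ X ∧ ∀ x ∈ X \ I, (∀ i ∈ I, A x i) ∨ (∀ i ∈ I, A i x)

/-- Trivial intervals of the tournament induced on `X`. -/
def IsTrivialOn {V : Type*} (X I : Set V) : Prop :=
  I = ∅ ∨ (∃ v, I = {v}) ∨ I = X

/-- The subtournament induced on `X` is indecomposable. -/
def IndecomposableOn {V : Type*} (A : V → V → Prop) (X : Set V) : Prop :=
  ∀ I : Set V, IsIntervalOn A X I → IsTrivialOn X I

/-- The subtournament of `A` on `X` is isomorphic to the subtournament of `B` on `Y`. -/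
def IsoOn {V W : Type*} (A : V → V → Prop) (B : W → W → Prop) (X : Set V) (Y : Set W) : Prop :=
  ∃ f : X → Y, Function.Bijective f ∧ ∀ a b : X, A a b ↔ B (f a) (f b)

/-- `⟨X⟩`: the outside vertices comparable with all of `X` at once. -/
def bracketSet {V : Type*} (A : V → V → Prop) (X : Set V) : Set V :=
  {x | x ∉ X ∧ ((∀ u ∈ X, A x u) ∨ (∀ u ∈ X, A u x))}

/-- `X(u)`: the outside vertices `x` such that `{u, x}` is an interval of `T[X ∪ {x}]`. -/
def slotSet {V : Type*} (A : V → V → Prop) (X : Set V) (u : V) : Set V :=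
  {x | x ∉ X ∧ IsIntervalOn A (X ∪ {x}) {u, x}}

/-- `Ext(X)`: the outside vertices `x` such that `T[X ∪ {x}]` is indecomposable. -/
def extSet {V : Type*} (A : V → V → Prop) (X : Set V) : Set V :=
  {x | x ∉ X ∧ IndecomposableOn A (X ∪ {x})}

section Prelim
variable {V : Type*} {A : V → V → Prop}

lemma tasym (hA : IsTournament A) {x y : V} (h1 : A x y) (h2 : A y x) : False := by
  rcases eq_or_ne x y with rfl | hne
  · exact hA.1 x h1
  · exact ((hA.2 x y hne).mp h1) h2

lemma tne (hA : IsTournament A) {x y : V} (h1 : A x y) : x ≠ y := by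
  rintro rfl; exact hA.1 x h1

lemma ttotal (hA : IsTournament A) {x y : V} (h : x ≠ y) : A x y ∨ A y x := by
  by_cases h2 : A y x
  · exact Or.inr h2
  · exact Or.inl ((hA.2 x y h).mpr h2)

lemma tflip (hA : IsTournament A) {x y : V} (h : x ≠ y) : ¬ A x y ↔ A y x := by
  rw [hA.2 x y h]; tauto

/-- uniformity extraction from an interval -/
lemma interval_iff (hA : IsTournament A) {S I : Set V} (hI : IsIntervalOn A S I) {t i i' : V}
    (htS : t ∈ S) (htI : t ∉ I) (hi : i ∈ I) (hi' : i' ∈ I) : A t i ↔ A t i' := by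
  rcases hI.2 t ⟨htS, htI⟩ with h | h
  · simp [h i hi, h i' hi']
  · constructor
    · intro hti; exact absurd (h i hi) (fun hh => tasym hA hti hh)
    · intro hti; exact absurd (h i' hi') (fun hh => tasym hA hti hh)

lemma interval_kill (hA : IsTournament A) {S I : Set V} (hI : IsIntervalOn A S I) {t i i' : V}
    (htS : t ∈ S) (htI : t ∉ I) (hi : i ∈ I) (hi' : i' ∈ I)
    (h1 : A t i) (h2 : A i' t) : False := by
  have := (interval_iff hA hI htS htI hi hi').mp h1
  exact tasym hA this h2

/-- building an interval's uniformity condition from iff data -/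
lemma unif_or (hA : IsTournament A) {I : Set V} {x r : V} (hr : r ∈ I)
    (hne : ∀ i ∈ I, i ≠ x) (hiff : ∀ i ∈ I, A x i ↔ A x r) :
    (∀ i ∈ I, A x i) ∨ (∀ i ∈ I, A i x) := by
  by_cases hxr : A x r
  · exact Or.inl (fun i hi => (hiff i hi).mpr hxr)
  · refine Or.inr (fun i hi => ?_)
    have : ¬ A x i := fun h => hxr ((hiff i hi).mp h)
    exact (tflip hA (fun h => hne i hi h.symm)).mp this

lemma interval_restrict {S Y I : Set V} (hI : IsIntervalOn A S I) (hYS : Y ⊆ S) :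
    IsIntervalOn A Y (I ∩ Y) := by
  refine ⟨Set.inter_subset_right, fun x hx => ?_⟩
  have hxI : x ∉ I := fun h => hx.2 ⟨h, hx.1⟩
  rcases hI.2 x ⟨hYS hx.1, hxI⟩ with h | h
  · exact Or.inl (fun i hi => h i hi.1)
  · exact Or.inr (fun i hi => h i hi.1)

lemma two_of_nontrivial {S I : Set V} (h : ¬ IsTrivialOn S I) :
    ∃ x y, x ∈ I ∧ y ∈ I ∧ x ≠ y := by
  by_contra hc
  push_neg at hc
  apply h
  rcases Set.eq_empty_or_nonempty I with he | ⟨x, hx⟩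
  · exact Or.inl he
  · refine Or.inr (Or.inl ⟨x, ?_⟩)
    ext y; simp only [Set.mem_singleton_iff]
    exact ⟨fun hy => (by by_contra hne; exact hne (hc y x hy hx)), fun hy => hy ▸ hx⟩

lemma mem_diff_pair {X : Set V} (hX3 : 3 ≤ X.ncard) (u u' : V) :
    ∃ w ∈ X, w ≠ u ∧ w ≠ u' := by
  by_contra hc
  push_neg at hc
  have hsub : X ⊆ {u, u'} := by
    intro w hw
    rcases Classical.em (w = u) with rfl | h1
    · exact Or.inl rfl
    · exact Or.inr (hc w hw h1)
  have := Set.ncard_le_ncard hsub (Set.toFinite _)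
  have h2 : ({u, u'} : Set V).ncard ≤ 2 := by
    have := Set.ncard_insert_le u ({u'} : Set V)
    simpa using this
  omega

lemma two_mem_diff {X : Set V} (hX3 : 3 ≤ X.ncard) (v : V) :
    ∃ w w', w ∈ X ∧ w' ∈ X ∧ w ≠ v ∧ w' ≠ v ∧ w ≠ w' := by
  obtain ⟨w, hw, hwv, -⟩ := mem_diff_pair hX3 v v
  obtain ⟨w', hw', hw'v, hw'w⟩ := mem_diff_pair hX3 v w
  exact ⟨w, w', hw, hw', hwv, hw'v, (Ne.symm hw'w)⟩

end Prelim

section BaseY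
variable {V : Type*} {A : V → V → Prop} {Y : Set V}

/-- no vertex of an indecomposable (≥3) tournament beats all others -/
lemma not_dom (hA : IsTournament A) (hYind : IndecomposableOn A Y) (hY3 : 3 ≤ Y.ncard)
    {v : V} (hv : v ∈ Y) (h : ∀ w ∈ Y, w ≠ v → A v w) : False := by
  have hint : IsIntervalOn A Y (Y \ {v}) := by
    refine ⟨Set.diff_subset, fun x hx => ?_⟩
    have hxv : x = v := by
      have := hx.2; simp only [Set.mem_diff, not_and, not_not] at this
      simpa using this hx.1
    subst hxv
    exact Or.inl (fun i hi => h i hi.1 (by simpa using hi.2))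
  obtain ⟨w, w', hw, hw', hwv, hw'v, hww'⟩ := two_mem_diff hY3 v
  rcases hYind _ hint with he | ⟨x, hx⟩ | he
  · exact absurd he (by simp [Set.eq_empty_iff_forall_notMem]; exact ⟨w, hw, hwv⟩)
  · have h1 : w = x := by have : w ∈ Y \ {v} := ⟨hw, by simpa using hwv⟩; rw [hx] at this; simpa using this
    have h2 : w' = x := by have : w' ∈ Y \ {v} := ⟨hw', by simpa using hw'v⟩; rw [hx] at this; simpa using this
    exact hww' (h1.trans h2.symm)
  · have : v ∈ Y \ {v} := by rw [he]; exact hv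
    simp at this

lemma not_dommed (hA : IsTournament A) (hYind : IndecomposableOn A Y) (hY3 : 3 ≤ Y.ncard)
    {v : V} (hv : v ∈ Y) (h : ∀ w ∈ Y, w ≠ v → A w v) : False := by
  have hint : IsIntervalOn A Y (Y \ {v}) := by
    refine ⟨Set.diff_subset, fun x hx => ?_⟩
    have hxv : x = v := by
      have := hx.2; simp only [Set.mem_diff, not_and, not_not] at this
      simpa using this hx.1
    subst hxv
    exact Or.inr (fun i hi => h i hi.1 (by simpa using hi.2))
  obtain ⟨w, w', hw, hw', hwv, hw'v, hww'⟩ := two_mem_diff hY3 v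
  rcases hYind _ hint with he | ⟨x, hx⟩ | he
  · exact absurd he (by simp [Set.eq_empty_iff_forall_notMem]; exact ⟨w, hw, hwv⟩)
  · have h1 : w = x := by have : w ∈ Y \ {v} := ⟨hw, by simpa using hwv⟩; rw [hx] at this; simpa using this
    have h2 : w' = x := by have : w' ∈ Y \ {v} := ⟨hw', by simpa using hw'v⟩; rw [hx] at this; simpa using this
    exact hww' (h1.trans h2.symm)
  · have : v ∈ Y \ {v} := by rw [he]; exact hv
    simp at this

/-- two vertices of Y seen identically by the rest form a forbidden module -/
lemma no_pair_module (hA : IsTournament A) (hYind : IndecomposableOn A Y) (hY3 : 3 ≤ Y.ncard)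
    {u u' : V} (hu : u ∈ Y) (hu' : u' ∈ Y) (huu' : u ≠ u')
    (h : ∀ w ∈ Y, w ≠ u → w ≠ u' → (A w u ↔ A w u')) : False := by
  have hint : IsIntervalOn A Y {u, u'} := by
    refine ⟨by rintro x (rfl | rfl); exacts [hu, (by simpa using hu')], fun x hx => ?_⟩
    have hxu : x ≠ u := fun hh => hx.2 (by simp [hh])
    have hxu' : x ≠ u' := fun hh => hx.2 (by simp [hh])
    refine unif_or hA (show u ∈ ({u, u'} : Set V) by simp) ?_ ?_
    · rintro i (rfl | rfl); exacts [hxu.symm, (by simpa using hxu'.symm)]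
    · rintro i (rfl | rfl)
      · rfl
      · simpa using (h x hx.1 hxu hxu').symm
  obtain ⟨w, hw, hwu, hwu'⟩ := mem_diff_pair hY3 u u'
  rcases hYind _ hint with he | ⟨x, hx⟩ | he
  · have : u ∈ ({u, u'} : Set V) := by simp
    rw [he] at this; exact this
  · have h1 : u = x := by have : u ∈ ({u,u'} : Set V) := by simp
                          rw [hx] at this; simpa using this
    have h2 : u' = x := by have : u' ∈ ({u,u'} : Set V) := by simp
                           rw [hx] at this; simpa using this
    exact huu' (h1.trans h2.symm)
  · have : w ∈ ({u, u'} : Set V) := he ▸ hw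
    rcases this with rfl | h2
    · exact hwu rfl
    · exact hwu' (by simpa using h2)

lemma slot_iff (hA : IsTournament A) {z u : V} (hz : z ∈ slotSet A Y u)
    {w : V} (hw : w ∈ Y) (hwu : w ≠ u) : A w z ↔ A w u := by
  have hzY : z ∉ Y := hz.1
  have hint := hz.2
  have hwz : w ≠ z := fun h => hzY (h ▸ hw)
  have := interval_iff hA hint (Or.inl hw : w ∈ Y ∪ {z})
    (by simp only [Set.mem_insert_iff, Set.mem_singleton_iff]; push_neg; exact ⟨hwu, hwz⟩)
    (show z ∈ ({u, z} : Set V) by simp) (show u ∈ ({u, z} : Set V) by simp)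
  exact this

lemma slot_of_iff (hA : IsTournament A) {z u : V} (hz : z ∉ Y) (hu : u ∈ Y)
    (h : ∀ w ∈ Y, w ≠ u → (A w z ↔ A w u)) : z ∈ slotSet A Y u := by
  refine ⟨hz, ⟨?_, ?_⟩⟩
  · rintro x (rfl | rfl)
    · exact Or.inl hu
    · exact Or.inr rfl
  · intro x hx
    have hxY : x ∈ Y := by
      rcases hx.1 with h1 | h1
      · exact h1
      · exact absurd (by simp [h1] : x ∈ ({u,z} : Set V)) hx.2
    have hxu : x ≠ u := fun hh => hx.2 (by simp [hh])
    have hxz : x ≠ z := fun hh => hz (hh ▸ hxY)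
    refine unif_or hA (show u ∈ ({u, z} : Set V) by simp) ?_ ?_
    · rintro i (rfl | rfl); exacts [hxu.symm, (by simpa using hxz.symm)]
    · rintro i (rfl | rfl)
      · rfl
      · simpa using h x hxY hxu

/-- a slot vertex beats someone in Y (and is beaten by someone) -/
lemma slot_beaten (hA : IsTournament A) (hYind : IndecomposableOn A Y) (hY3 : 3 ≤ Y.ncard)
    {z u : V} (hz : z ∈ slotSet A Y u) (hu : u ∈ Y) : ∃ w ∈ Y, A w z := by
  by_contra hc
  push_neg at hc
  refine not_dom hA hYind hY3 hu (fun w hw hwu => ?_)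
  have h1 : ¬ A w u := fun h => (hc w hw) ((slot_iff hA hz hw hwu).mpr h)
  exact (tflip hA hwu).mp h1

lemma slot_beats (hA : IsTournament A) (hYind : IndecomposableOn A Y) (hY3 : 3 ≤ Y.ncard)
    {z u : V} (hz : z ∈ slotSet A Y u) (hu : u ∈ Y) : ∃ w ∈ Y, A z w := by
  by_contra hc
  push_neg at hc
  refine not_dommed hA hYind hY3 hu (fun w hw hwu => ?_)
  have hwz : w ≠ z := fun h => hz.1 (h ▸ hw)
  have h1 : A w z := (tflip hA (fun h => hwz h.symm)).mp (hc w hw)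
  exact (slot_iff hA hz hw hwu).mp h1

lemma slot_not_bracket (hA : IsTournament A) (hYind : IndecomposableOn A Y) (hY3 : 3 ≤ Y.ncard)
    {z u : V} (hz : z ∈ slotSet A Y u) (hu : u ∈ Y) (hbr : z ∈ bracketSet A Y) : False := by
  rcases hbr.2 with h | h
  · obtain ⟨w, hw, hwz⟩ := slot_beaten hA hYind hY3 hz hu
    exact tasym hA (h w hw) hwz
  · obtain ⟨w, hw, hwz⟩ := slot_beats hA hYind hY3 hz hu
    exact tasym hA hwz (h w hw)

lemma slot_unique (hA : IsTournament A) (hYind : IndecomposableOn A Y) (hY3 : 3 ≤ Y.ncard)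
    {z u u' : V} (hz : z ∈ slotSet A Y u) (hz' : z ∈ slotSet A Y u')
    (hu : u ∈ Y) (hu' : u' ∈ Y) : u = u' := by
  by_contra hne
  refine no_pair_module hA hYind hY3 hu hu' hne (fun w hw hwu hwu' => ?_)
  exact (slot_iff hA hz hw hwu).symm.trans (slot_iff hA hz' hw hwu')

lemma ext_not_bracket (hA : IsTournament A) (hY3 : 3 ≤ Y.ncard)
    {z : V} (hz : z ∈ extSet A Y) (hbr : z ∈ bracketSet A Y) : False := by
  have hzY : z ∉ Y := hz.1
  have hint : IsIntervalOn A (Y ∪ {z}) Y := by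
    refine ⟨Set.subset_union_left, fun x hx => ?_⟩
    have hxz : x = z := by
      rcases hx.1 with h | h
      · exact absurd h hx.2
      · exact h
    subst hxz
    rcases hbr.2 with h | h
    · exact Or.inl (fun i hi => h i hi)
    · exact Or.inr (fun i hi => h i hi)
  obtain ⟨w, w', hw, hw', -, -, hww'⟩ := two_mem_diff hY3 z
  rcases hz.2 _ hint with he | ⟨x, hx⟩ | he
  · rw [Set.eq_empty_iff_forall_notMem] at he; exact he w hw
  · exact hww' (by rw [hx] at hw hw'; simp at hw hw'; rw [hw, hw'])
  · have : z ∈ Y := by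
      have : z ∈ Y ∪ {z} := by simp
      rwa [← he] at this
    exact hzY this

lemma ext_not_slot (hA : IsTournament A) (hY3 : 3 ≤ Y.ncard)
    {z u : V} (hz : z ∈ extSet A Y) (hu : u ∈ Y) (hsl : z ∈ slotSet A Y u) : False := by
  have hzY : z ∉ Y := hz.1
  rcases hz.2 _ hsl.2 with he | ⟨x, hx⟩ | he
  · have : u ∈ ({u, z} : Set V) := by simp
    rw [he] at this; exact this
  · have h1 : u = x := by have : u ∈ ({u,z} : Set V) := by simp
                          rw [hx] at this; simpa using this
    have h2 : z = x := by have : z ∈ ({u,z} : Set V) := by simp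
                          rw [hx] at this; simpa using this
    exact hzY ((h2.trans h1.symm) ▸ hu)
  · obtain ⟨w, hw, hwu, -⟩ := mem_diff_pair hY3 u u
    have : w ∈ ({u, z} : Set V) := by rw [he]; exact Or.inl hw
    rcases this with rfl | h2
    · exact hwu rfl
    · exact hzY ((by simpa using h2 : w = z) ▸ hw)

/-- every outside vertex which is not in Ext is bracket or slot -/
lemma classify (hA : IsTournament A) (hYind : IndecomposableOn A Y)
    {z : V} (hz : z ∉ Y) (hne : z ∉ extSet A Y) :
    z ∈ bracketSet A Y ∨ ∃ u ∈ Y, z ∈ slotSet A Y u := by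
  have hdec : ¬ IndecomposableOn A (Y ∪ {z}) := fun h => hne ⟨hz, h⟩
  rw [IndecomposableOn] at hdec
  push_neg at hdec
  obtain ⟨I, hI, hnt⟩ := hdec
  have htriv : IsTrivialOn Y (I ∩ Y) := hYind _ (interval_restrict hI Set.subset_union_left)
  rcases htriv with he | ⟨v, hv⟩ | he
  · -- I ⊆ {z}
    exfalso
    apply hnt
    have hIz : I ⊆ {z} := by
      intro i hi
      rcases hI.1 hi with h | h
      · exfalso
        have hmem : i ∈ I ∩ Y := ⟨hi, h⟩
        rw [he] at hmem
        exact hmem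
      · exact h
    rcases Set.eq_empty_or_nonempty I with h | ⟨x, hx⟩
    · exact Or.inl h
    · refine Or.inr (Or.inl ⟨z, ?_⟩)
      have hxz : x = z := hIz hx
      ext y
      simp only [Set.mem_singleton_iff]
      exact ⟨fun hy => hIz hy, fun hy => hy ▸ (hxz ▸ hx)⟩
  · -- I ∩ Y = {v}
    have hvI : v ∈ I := by
      have : v ∈ I ∩ Y := hv ▸ rfl
      exact this.1
    have hvY : v ∈ Y := by
      have : v ∈ I ∩ Y := hv ▸ rfl
      exact this.2
    by_cases hzI : z ∈ I
    · right
      refine ⟨v, hvY, slot_of_iff hA hz hvY (fun w hw hwv => ?_)⟩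
      have hwI : w ∉ I := by
        intro h
        have : w ∈ I ∩ Y := ⟨h, hw⟩
        rw [hv] at this; exact hwv (by simpa using this)
      exact interval_iff hA hI (Or.inl hw) hwI hzI hvI
    · exfalso
      apply hnt
      refine Or.inr (Or.inl ⟨v, ?_⟩)
      ext i
      simp only [Set.mem_singleton_iff]
      constructor
      · intro hi
        rcases hI.1 hi with h | h
        · have : i ∈ I ∩ Y := ⟨hi, h⟩
          rw [hv] at this; simpa using this
        · exact absurd (h ▸ hi) hzI
      · rintro rfl; exact hvI
  · -- Y ⊆ I
    have hYI : Y ⊆ I := by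
      intro w hw
      have hmem : w ∈ I ∩ Y := by rw [he]; exact hw
      exact hmem.1
    by_cases hzI : z ∈ I
    · exfalso
      apply hnt
      refine Or.inr (Or.inr ?_)
      apply Set.Subset.antisymm hI.1
      rintro x (hx | rfl)
      · exact hYI hx
      · exact hzI
    · left
      refine ⟨hz, ?_⟩
      rcases hI.2 z ⟨Or.inr rfl, hzI⟩ with h | h
      · exact Or.inl (fun u hu => h u (hYI hu))
      · exact Or.inr (fun u hu => h u (hYI hu))

end BaseY

section ER
variable {V : Type*} {A : V → V → Prop} {Y : Set V}

/-- Classification of decomposable 2-vertex extensions. -/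
lemma pairCases (hA : IsTournament A) (hYind : IndecomposableOn A Y)
    {y z : V} (hy : y ∉ Y) (hz : z ∉ Y) (hyz : y ≠ z)
    (hdec : ¬ IndecomposableOn A (Y ∪ {y, z})) :
    (y ∈ bracketSet A Y ∧ z ∈ bracketSet A Y) ∨
    (z ∈ bracketSet A Y ∧ ∀ u₀ ∈ Y, (A z u₀ ↔ A z y)) ∨
    (y ∈ bracketSet A Y ∧ ∀ u₀ ∈ Y, (A y u₀ ↔ A y z)) ∨
    (∃ u ∈ Y, y ∈ slotSet A Y u ∧ (A z u ↔ A z y)) ∨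
    (∃ u ∈ Y, z ∈ slotSet A Y u ∧ (A y u ↔ A y z)) ∨
    (∃ u ∈ Y, y ∈ slotSet A Y u ∧ z ∈ slotSet A Y u) ∨
    (∀ w ∈ Y, A w y ↔ A w z) := by
  rw [IndecomposableOn] at hdec
  push_neg at hdec
  obtain ⟨I, hI, hnt⟩ := hdec
  have hyS : y ∈ Y ∪ {y, z} := by simp
  have hzS : z ∈ Y ∪ {y, z} := by simp
  have hmem : ∀ i ∈ I, i ∈ Y ∨ i = y ∨ i = z := by
    intro i hi
    rcases hI.1 hi with h | h
    · exact Or.inl h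
    · rcases h with h | h
      · exact Or.inr (Or.inl h)
      · exact Or.inr (Or.inr h)
  have htriv : IsTrivialOn Y (I ∩ Y) := hYind _ (interval_restrict hI Set.subset_union_left)
  rcases htriv with he | ⟨v, hv⟩ | he
  · -- I ∩ Y = ∅  : I ⊆ {y,z}
    have hIyz : I ⊆ {y, z} := by
      intro i hi
      rcases hmem i hi with h | h | h
      · exfalso; have hm : i ∈ I ∩ Y := ⟨hi, h⟩; rw [he] at hm; exact hm
      · simp [h]
      · simp [h]
    obtain ⟨a, b, ha, hb, hab⟩ := two_of_nontrivial hnt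
    have hyI : y ∈ I ∧ z ∈ I := by
      rcases hIyz ha with rfl | ha'
      · rcases hIyz hb with rfl | hb'
        · exact absurd rfl hab
        · exact ⟨ha, (by simpa using hb') ▸ hb⟩
      · have ha2 : a = z := by simpa using ha'
        rcases hIyz hb with rfl | hb'
        · exact ⟨hb, ha2 ▸ ha⟩
        · exact absurd (ha2.trans (by simpa using hb' : b = z).symm) hab
    refine Or.inr (Or.inr (Or.inr (Or.inr (Or.inr (Or.inr (fun w hw => ?_))))))
    have hwI : w ∉ I := fun h => (by
      rcases hIyz h with h1 | h1
      · exact hy (h1 ▸ hw)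
      · exact hz ((by simpa using h1 : w = z) ▸ hw))
    exact interval_iff hA hI (Or.inl hw) hwI hyI.1 hyI.2
  · -- I ∩ Y = {v}
    have hvI : v ∈ I := by have : v ∈ I ∩ Y := by rw [hv]; rfl
                           exact this.1
    have hvY : v ∈ Y := by have : v ∈ I ∩ Y := by rw [hv]; rfl
                           exact this.2
    have houtY : ∀ w ∈ Y, w ≠ v → w ∉ I := by
      intro w hw hwv h
      have : w ∈ I ∩ Y := ⟨h, hw⟩
      rw [hv] at this; exact hwv (by simpa using this)
    by_cases hyI : y ∈ I
    · have hslot : y ∈ slotSet A Y v := by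
        refine slot_of_iff hA hy hvY (fun w hw hwv => ?_)
        exact interval_iff hA hI (Or.inl hw) (houtY w hw hwv) hyI hvI
      by_cases hzI : z ∈ I
      · have hslotz : z ∈ slotSet A Y v := by
          refine slot_of_iff hA hz hvY (fun w hw hwv => ?_)
          exact interval_iff hA hI (Or.inl hw) (houtY w hw hwv) hzI hvI
        exact Or.inr (Or.inr (Or.inr (Or.inr (Or.inr (Or.inl ⟨v, hvY, hslot, hslotz⟩)))))
      · refine Or.inr (Or.inr (Or.inr (Or.inl ⟨v, hvY, hslot, ?_⟩)))
        exact interval_iff hA hI hzS hzI hvI hyI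
    · by_cases hzI : z ∈ I
      · have hslot : z ∈ slotSet A Y v := by
          refine slot_of_iff hA hz hvY (fun w hw hwv => ?_)
          exact interval_iff hA hI (Or.inl hw) (houtY w hw hwv) hzI hvI
        refine Or.inr (Or.inr (Or.inr (Or.inr (Or.inl ⟨v, hvY, hslot, ?_⟩))))
        exact interval_iff hA hI hyS hyI hvI hzI
      · exfalso
        apply hnt
        refine Or.inr (Or.inl ⟨v, ?_⟩)
        ext i
        simp only [Set.mem_singleton_iff]
        constructor
        · intro hi
          rcases hmem i hi with h | h | h
          · by_contra hne
            exact houtY i h hne hi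
          · exact absurd (h ▸ hi) hyI
          · exact absurd (h ▸ hi) hzI
        · rintro rfl; exact hvI
  · -- Y ⊆ I
    have hYI : Y ⊆ I := by
      intro w hw
      have hm : w ∈ I ∩ Y := by rw [he]; exact hw
      exact hm.1
    have hbr : ∀ t ∈ Y ∪ {y, z}, t ∉ I → t ∉ Y →
        (t ∈ bracketSet A Y ∧ ∀ u₀ ∈ Y, ∀ s ∈ I, (A t u₀ ↔ A t s)) := by
      intro t htS htI htY
      have hiff : ∀ u₀ ∈ Y, ∀ s ∈ I, (A t u₀ ↔ A t s) := by
        intro u₀ hu₀ s hs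
        exact interval_iff hA hI htS htI (hYI hu₀) hs
      refine ⟨⟨htY, ?_⟩, hiff⟩
      rcases hI.2 t ⟨htS, htI⟩ with h | h
      · exact Or.inl (fun u hu => h u (hYI hu))
      · exact Or.inr (fun u hu => h u (hYI hu))
    by_cases hyI : y ∈ I
    · by_cases hzI : z ∈ I
      · exfalso
        apply hnt
        refine Or.inr (Or.inr ?_)
        apply Set.Subset.antisymm hI.1
        rintro x (hx | hx | hx)
        · exact hYI hx
        · exact hx ▸ hyI
        · exact (by simpa using hx : x = z) ▸ hzI
      · obtain ⟨hb, hiff⟩ := hbr z hzS hzI hz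
        exact Or.inr (Or.inl ⟨hb, fun u₀ hu₀ => hiff u₀ hu₀ y hyI⟩)
    · by_cases hzI : z ∈ I
      · obtain ⟨hb, hiff⟩ := hbr y hyS hyI hy
        exact Or.inr (Or.inr (Or.inl ⟨hb, fun u₀ hu₀ => hiff u₀ hu₀ z hzI⟩))
      · obtain ⟨hb1, -⟩ := hbr y hyS hyI hy
        obtain ⟨hb2, -⟩ := hbr z hzS hzI hz
        exact Or.inl ⟨hb1, hb2⟩
end ER

section ER2
variable {V : Type*} {A : V → V → Prop} {Y : Set V}

lemma bracket_iff (hA : IsTournament A) {z : V} (hbr : z ∈ bracketSet A Y)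
    {u₀ u₁ : V} (h0 : u₀ ∈ Y) (h1 : u₁ ∈ Y) : A z u₀ ↔ A z u₁ := by
  rcases hbr.2 with h | h
  · simp [h u₀ h0, h u₁ h1]
  · have n0 : ¬ A z u₀ := fun hh => tasym hA hh (h u₀ h0)
    have n1 : ¬ A z u₁ := fun hh => tasym hA hh (h u₁ h1)
    simp [n0, n1]

lemma bracket_of_iff_bracket (hA : IsTournament A) {y z : V} (hy : y ∉ Y)
    (hbr : z ∈ bracketSet A Y) (h : ∀ w ∈ Y, A w y ↔ A w z) : y ∈ bracketSet A Y := by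
  refine ⟨hy, ?_⟩
  rcases hbr.2 with hb | hb
  · refine Or.inl (fun u hu => ?_)
    have huy : u ≠ y := fun hh => hy (hh ▸ hu)
    have h2 : ¬ A u z := fun hh => tasym hA hh (hb u hu)
    have h3 : ¬ A u y := fun hh => h2 ((h u hu).mp hh)
    exact (tflip hA huy).mp h3
  · refine Or.inr (fun u hu => (h u hu).mpr (hb u hu))

variable (hA : IsTournament A) (hYind : IndecomposableOn A Y) (hY3 : 3 ≤ Y.ncard)

include hA hYind hY3

lemma F1 {y z : V} (hy : y ∈ extSet A Y) (hz : z ∈ extSet A Y) (hyz : y ≠ z)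
    (hdec : ¬ IndecomposableOn A (Y ∪ {y, z})) : ∀ w ∈ Y, A w y ↔ A w z := by
  rcases pairCases hA hYind hy.1 hz.1 hyz hdec with
    ⟨h1, -⟩ | ⟨h1, -⟩ | ⟨h1, -⟩ | ⟨u, hu, h1, -⟩ | ⟨u, hu, h1, -⟩ | ⟨u, hu, h1, -⟩ | h
  · exact absurd h1 (fun hh => ext_not_bracket hA hY3 hy hh)
  · exact absurd h1 (fun hh => ext_not_bracket hA hY3 hz hh)
  · exact absurd h1 (fun hh => ext_not_bracket hA hY3 hy hh)
  · exact absurd h1 (fun hh => ext_not_slot hA hY3 hy hu hh)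
  · exact absurd h1 (fun hh => ext_not_slot hA hY3 hz hu hh)
  · exact absurd h1 (fun hh => ext_not_slot hA hY3 hy hu hh)
  · exact h

lemma F2 {e z : V} (he : e ∈ extSet A Y) (hbr : z ∈ bracketSet A Y) (hez : e ≠ z)
    (hdec : ¬ IndecomposableOn A (Y ∪ {e, z})) : ∀ u₀ ∈ Y, A z u₀ ↔ A z e := by
  rcases pairCases hA hYind he.1 hbr.1 hez hdec with
    ⟨h1, -⟩ | ⟨-, h2⟩ | ⟨h1, -⟩ | ⟨u, hu, h1, -⟩ | ⟨u, hu, h1, -⟩ | ⟨u, hu, h1, -⟩ | h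
  · exact absurd h1 (fun hh => ext_not_bracket hA hY3 he hh)
  · exact h2
  · exact absurd h1 (fun hh => ext_not_bracket hA hY3 he hh)
  · exact absurd h1 (fun hh => ext_not_slot hA hY3 he hu hh)
  · exact absurd h1 (fun hh => slot_not_bracket hA hYind hY3 hh hu hbr)
  · exact absurd h1 (fun hh => ext_not_slot hA hY3 he hu hh)
  · exact absurd (bracket_of_iff_bracket hA he.1 hbr h)
      (fun hh => ext_not_bracket hA hY3 he hh)

lemma F3 {e z u : V} (he : e ∈ extSet A Y) (hsl : z ∈ slotSet A Y u) (hu : u ∈ Y)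
    (hez : e ≠ z) (hdec : ¬ IndecomposableOn A (Y ∪ {e, z})) : A e u ↔ A e z := by
  rcases pairCases hA hYind he.1 hsl.1 hez hdec with
    ⟨h1, -⟩ | ⟨h1, -⟩ | ⟨h1, -⟩ | ⟨u', hu', h1, -⟩ | ⟨u', hu', h1, h2⟩ | ⟨u', hu', h1, -⟩ | h
  · exact absurd h1 (fun hh => ext_not_bracket hA hY3 he hh)
  · exact absurd h1 (fun hh => slot_not_bracket hA hYind hY3 hsl hu hh)
  · exact absurd h1 (fun hh => ext_not_bracket hA hY3 he hh)
  · exact absurd h1 (fun hh => ext_not_slot hA hY3 he hu' hh)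
  · have : u' = u := slot_unique hA hYind hY3 h1 hsl hu' hu
    exact this ▸ h2
  · exact absurd h1 (fun hh => ext_not_slot hA hY3 he hu' hh)
  · exfalso
    refine ext_not_slot hA hY3 he hu (slot_of_iff hA he.1 hu (fun w hw hwu => ?_))
    exact (h w hw).trans (slot_iff hA hsl hw hwu)

lemma F4 {y z u : V} (hsl : y ∈ slotSet A Y u) (hu : u ∈ Y) (hbr : z ∈ bracketSet A Y)
    (hyz : y ≠ z) (hdec : ¬ IndecomposableOn A (Y ∪ {y, z})) :
    ∀ u₀ ∈ Y, A z u₀ ↔ A z y := by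
  rcases pairCases hA hYind hsl.1 hbr.1 hyz hdec with
    ⟨h1, -⟩ | ⟨-, h2⟩ | ⟨h1, -⟩ | ⟨u', hu', h1, h2⟩ | ⟨u', hu', h1, -⟩ | ⟨u', hu', -, h2⟩ | h
  · exact absurd h1 (fun hh => slot_not_bracket hA hYind hY3 hsl hu hh)
  · exact h2
  · exact absurd h1 (fun hh => slot_not_bracket hA hYind hY3 hsl hu hh)
  · exact fun u₀ hu₀ => (bracket_iff hA hbr hu₀ hu').trans h2
  · exact absurd h1 (fun hh => slot_not_bracket hA hYind hY3 hh hu' hbr)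
  · exact absurd h2 (fun hh => slot_not_bracket hA hYind hY3 hh hu' hbr)
  · exfalso
    refine slot_not_bracket hA hYind hY3 hsl hu
      (bracket_of_iff_bracket hA hsl.1 hbr h)

lemma F5 {y z u u' : V} (hsl : y ∈ slotSet A Y u) (hsl' : z ∈ slotSet A Y u')
    (hu : u ∈ Y) (hu' : u' ∈ Y) (huu' : u ≠ u') (hyz : y ≠ z)
    (hdec : ¬ IndecomposableOn A (Y ∪ {y, z})) : A z y ↔ A u' u := by
  have hzu : z ≠ u := fun hh => hsl'.1 (hh ▸ hu)
  have hyu' : y ≠ u' := fun hh => hsl.1 (hh ▸ hu')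
  rcases pairCases hA hYind hsl.1 hsl'.1 hyz hdec with
    ⟨h1, -⟩ | ⟨h1, -⟩ | ⟨h1, -⟩ | ⟨w, hw, h1, h2⟩ | ⟨w, hw, h1, h2⟩ | ⟨w, hw, h1, h2⟩ | h
  · exact absurd h1 (fun hh => slot_not_bracket hA hYind hY3 hsl hu hh)
  · exact absurd h1 (fun hh => slot_not_bracket hA hYind hY3 hsl' hu' hh)
  · exact absurd h1 (fun hh => slot_not_bracket hA hYind hY3 hsl hu hh)
  · -- w = u, h2 : A z w ↔ A z y
    have hwu : w = u := slot_unique hA hYind hY3 h1 hsl hw hu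
    rw [hwu] at h2
    have s1 : A u z ↔ A u u' := slot_iff hA hsl' hu huu'
    have e1 : A z u ↔ ¬ A u z := hA.2 z u hzu
    have e2 : A u' u ↔ ¬ A u u' := hA.2 u' u (Ne.symm huu')
    tauto
  · -- w = u', h2 : A y w ↔ A y z
    have hwu : w = u' := slot_unique hA hYind hY3 h1 hsl' hw hu'
    rw [hwu] at h2
    have s1 : A u' y ↔ A u' u := slot_iff hA hsl hu' (Ne.symm huu')
    have e1 : A y z ↔ ¬ A z y := hA.2 y z hyz
    have e2 : A y u' ↔ ¬ A u' y := hA.2 y u' hyu'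
    tauto
  · have e1 : u = w := slot_unique hA hYind hY3 hsl h1 hu hw
    have e2 : u' = w := slot_unique hA hYind hY3 hsl' h2 hu' hw
    exact absurd (e1.trans e2.symm) huu'
  · exfalso
    have : z ∈ slotSet A Y u := slot_of_iff hA hsl'.1 hu (fun w hw hwu =>
      ((h w hw).symm).trans (slot_iff hA hsl hw hwu))
    exact huu' (slot_unique hA hYind hY3 this hsl' hu hu')

end ER2

section ER3
variable {V : Type*} {A : V → V → Prop} {Y : Set V}

/-- Ehrenfeucht–Rozenberg: an indecomposable subtournament of an indecomposable
tournament with ≥ 2 missing vertices extends by two vertices. -/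
lemma ER_extend (hA : IsTournament A) (hT : IndecomposableOn A (Set.univ : Set V))
    (hYind : IndecomposableOn A Y) (hY3 : 3 ≤ Y.ncard)
    {a b : V} (haY : a ∉ Y) (hbY : b ∉ Y) (hab : a ≠ b) :
    ∃ x y, x ∉ Y ∧ y ∉ Y ∧ x ≠ y ∧ IndecomposableOn A (Y ∪ {x, y}) := by
  by_contra hno
  push_neg at hno
  replace hno : ∀ x y : V, x ∉ Y → y ∉ Y → x ≠ y → ¬ IndecomposableOn A (Y ∪ {x, y}) :=
    fun x y hx hy hxy => hno x y hx hy hxy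
  by_cases hslots : ∃ u ∈ Y, ∃ p, p ∈ slotSet A Y u
  · -- some slot class nonempty : Q = {u} ∪ Y(u) is a module of T
    obtain ⟨u, hu, p, hp⟩ := hslots
    set Q : Set V := insert u (slotSet A Y u) with hQ
    have hQint : IsIntervalOn A (Set.univ : Set V) Q := by
      refine ⟨Set.subset_univ _, fun x hx => ?_⟩
      have hxQ : x ∉ Q := hx.2
      have hxu : x ≠ u := fun hh => hxQ (by simp [hQ, hh])
      have hxsl : x ∉ slotSet A Y u := fun hh => hxQ (by simp [hQ]; exact Or.inr hh)
      refine unif_or hA (show u ∈ Q by simp [hQ]) ?_ ?_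
      · rintro i hi
        rcases hi with rfl | hi
        · exact Ne.symm hxu
        · intro hh; exact hxsl (hh ▸ hi)
      · rintro i hi
        rcases hi with rfl | hi
        · rfl
        · -- i ∈ slotSet A Y u ; show A x i ↔ A x u
          have hiY : i ∉ Y := hi.1
          have hxi : x ≠ i := fun hh => hxsl (hh ▸ hi)
          by_cases hxY : x ∈ Y
          · exact slot_iff hA hi hxY hxu
          · by_cases hxe : x ∈ extSet A Y
            · exact (F3 hA hYind hY3 hxe hi hu hxi (hno x i hxY hiY hxi)).symm
            · rcases classify hA hYind hxY hxe with hbr | ⟨u'', hu'', hsl''⟩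
              · have := F4 hA hYind hY3 hi hu hbr (Ne.symm hxi)
                  (hno i x hiY hxY (Ne.symm hxi))
                exact (this u hu).symm
              · have hne : u'' ≠ u := fun hh => hxsl (hh ▸ hsl'')
                have f5 : A x i ↔ A u'' u := F5 hA hYind hY3 hi hsl'' hu hu''
                  (Ne.symm hne) (Ne.symm hxi) (hno i x hiY hxY (Ne.symm hxi))
                have s1 : A u x ↔ A u u'' := slot_iff hA hsl'' hu (Ne.symm hne)
                have e1 : A x u ↔ ¬ A u x := hA.2 x u hxu
                have e2 : A u'' u ↔ ¬ A u u'' := hA.2 u'' u hne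
                tauto
    rcases hT Q hQint with he | ⟨v, hv⟩ | he
    · have : u ∈ Q := by simp [hQ]
      rw [he] at this; exact this
    · have h1 : u = v := by have : u ∈ Q := by simp [hQ]
                            rw [hv] at this; simpa using this
      have h2 : p = v := by have : p ∈ Q := by simp [hQ]; exact Or.inr hp
                            rw [hv] at this; simpa using this
      exact hp.1 ((h2.trans h1.symm) ▸ hu)
    · obtain ⟨w, hw, hwu, -⟩ := mem_diff_pair hY3 u u
      have : w ∈ Q := by rw [he]; trivial
      rcases this with rfl | hsl
      · exact hwu rfl
      · exact hsl.1 hw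
  · -- all slot classes empty
    push_neg at hslots
    have hclass : ∀ x, x ∉ Y → x ∉ extSet A Y → x ∈ bracketSet A Y := by
      intro x hxY hxe
      rcases classify hA hYind hxY hxe with h | ⟨u, hu, hsl⟩
      · exact h
      · exact absurd hsl (hslots u hu x)
    obtain ⟨u₀, hu₀, -, -⟩ := mem_diff_pair hY3 a a
    by_cases hext : ∃ e, e ∈ extSet A Y
    · obtain ⟨e, he⟩ := hext
      by_cases hbrne : ∃ c, c ∈ bracketSet A Y
      · -- K = Y ∪ Ext is a module
        obtain ⟨c, hc⟩ := hbrne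
        set K : Set V := Y ∪ extSet A Y with hK
        have hKint : IsIntervalOn A (Set.univ : Set V) K := by
          refine ⟨Set.subset_univ _, fun x hx => ?_⟩
          have hxK : x ∉ K := hx.2
          have hxY : x ∉ Y := fun hh => hxK (Or.inl hh)
          have hxe : x ∉ extSet A Y := fun hh => hxK (Or.inr hh)
          have hbr := hclass x hxY hxe
          refine unif_or hA (show u₀ ∈ K from Or.inl hu₀) ?_ ?_
          · rintro i (hi | hi)
            · intro hh; exact hxY (hh ▸ hi)
            · intro hh; exact hxe (hh ▸ hi)
          · rintro i (hi | hi)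
            · exact bracket_iff hA hbr hi hu₀
            · have hxi : x ≠ i := fun hh => hxe (hh ▸ hi)
              have := F2 hA hYind hY3 hi hbr (Ne.symm hxi) (hno i x hi.1 hxY (Ne.symm hxi))
              exact (this u₀ hu₀).symm
        rcases hT K hKint with he' | ⟨v, hv⟩ | he'
        · have : u₀ ∈ K := Or.inl hu₀
          rw [he'] at this; exact this
        · obtain ⟨w, w', hw, hw', -, -, hww'⟩ := two_mem_diff hY3 u₀
          have h1 : w = v := by have : w ∈ K := Or.inl hw
                                rw [hv] at this; simpa using this
          have h2 : w' = v := by have : w' ∈ K := Or.inl hw'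
                                 rw [hv] at this; simpa using this
          exact hww' (h1.trans h2.symm)
        · have : c ∈ K := by rw [he']; trivial
          rcases this with hcy | hce
          · exact hc.1 hcy
          · exact ext_not_bracket hA hY3 hce hc
      · -- bracket empty too: Ext = complement of Y, and it is a module
        push_neg at hbrne
        have hallext : ∀ x, x ∉ Y → x ∈ extSet A Y := by
          intro x hxY
          by_contra hxe
          exact hbrne x (hclass x hxY hxe)
        set K : Set V := extSet A Y with hK
        have hKint : IsIntervalOn A (Set.univ : Set V) K := by
          refine ⟨Set.subset_univ _, fun x hx => ?_⟩
          have hxK : x ∉ K := hx.2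
          have hxY : x ∈ Y := by
            by_contra hh; exact hxK (hallext x hh)
          refine unif_or hA (show e ∈ K from he) ?_ ?_
          · intro i hi hh
            exact (hi : i ∈ extSet A Y).1 (hh ▸ hxY)
          · intro i hi
            rcases eq_or_ne i e with rfl | hie
            · rfl
            · exact F1 hA hYind hY3 hi he hie (hno i e hi.1 he.1 hie) x hxY
        rcases hT K hKint with he' | ⟨v, hv⟩ | he'
        · rw [he'] at he; exact he
        · have h1 : a = v := by have : a ∈ K := hallext a haY
                                rw [hv] at this; simpa using this
          have h2 : b = v := by have : b ∈ K := hallext b hbY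
                                rw [hv] at this; simpa using this
          exact hab (h1.trans h2.symm)
        · have : u₀ ∈ K := by rw [he']; trivial
          exact this.1 hu₀
    · -- Ext empty, slots empty: Y itself is a module
      push_neg at hext
      have hKint : IsIntervalOn A (Set.univ : Set V) Y := by
        refine ⟨Set.subset_univ _, fun x hx => ?_⟩
        have hxY : x ∉ Y := hx.2
        have hbr := hclass x hxY (hext x)
        rcases hbr.2 with h | h
        · exact Or.inl h
        · exact Or.inr h
      rcases hT Y hKint with he' | ⟨v, hv⟩ | he'
      · rw [he'] at hu₀; exact hu₀
      · obtain ⟨w, w', hw, hw', -, -, hww'⟩ := two_mem_diff hY3 u₀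
        have h1 : w = v := by rw [hv] at hw; simpa using hw
        have h2 : w' = v := by rw [hv] at hw'; simpa using hw'
        exact hww' (h1.trans h2.symm)
      · exact haY (by rw [he']; trivial)
end ER3

section Chain
variable {V : Type*} [Fintype V] {A : V → V → Prop} {X : Set V}

lemma chain_lemma (hA : IsTournament A) (hT : IndecomposableOn A (Set.univ : Set V))
    (hX3 : 3 ≤ X.ncard) :
    ∀ n (Y : Set V), X ⊆ Y → IndecomposableOn A Y → Yᶜ.ncard = n →
      ∃ Z, Y ⊆ Z ∧ IndecomposableOn A Z ∧ Zᶜ.ncard ≤ 1 ∧ Zᶜ.ncard % 2 = n % 2 := by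
  intro n
  induction n using Nat.strong_induction_on with
  | _ n ih =>
    intro Y hXY hYind hcard
    by_cases hn : n ≤ 1
    · exact ⟨Y, subset_rfl, hYind, hcard ▸ hn, by rw [hcard]⟩
    · push_neg at hn
      have h2 : 1 < Yᶜ.ncard := hcard ▸ hn
      obtain ⟨a, b, ha, hb, hab⟩ := (Set.one_lt_ncard_iff (Set.toFinite _)).mp h2
      have hY3 : 3 ≤ Y.ncard := le_trans hX3 (Set.ncard_le_ncard hXY (Set.toFinite _))
      obtain ⟨x, y, hx, hy, hxy, hind⟩ := ER_extend hA hT hYind hY3 ha hb hab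
      have hcompl : (Y ∪ {x, y})ᶜ = (Yᶜ \ {x}) \ {y} := by
        ext v; simp only [Set.mem_compl_iff, Set.mem_union, Set.mem_diff,
          Set.mem_insert_iff, Set.mem_singleton_iff]
        tauto
      have hxm : x ∈ Yᶜ := hx
      have hym : y ∈ Yᶜ \ {x} := ⟨hy, fun hh => hxy hh.symm⟩
      have hc1 : (Yᶜ \ {x}).ncard = n - 1 := by
        rw [Set.ncard_diff_singleton_of_mem hxm, hcard]
      have hc2 : ((Yᶜ \ {x}) \ {y}).ncard = n - 2 := by
        rw [Set.ncard_diff_singleton_of_mem hym, hc1]; omega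
      obtain ⟨Z, hZ1, hZ2, hZ3, hZ4⟩ := ih (n - 2) (by omega) (Y ∪ {x, y})
        (hXY.trans Set.subset_union_left) hind (by rw [hcompl]; exact hc2)
      exact ⟨Z, Set.subset_union_left.trans hZ1, hZ2, hZ3, by omega⟩

lemma no_odd (hA : IsTournament A) (hT : IndecomposableOn A (Set.univ : Set V))
    (hX3 : 3 ≤ X.ncard) (hsupp : ∀ x : V, IndecomposableOn A ({x}ᶜ : Set V) → x ∈ X)
    {Y : Set V} (hXY : X ⊆ Y) (hYind : IndecomposableOn A Y) : Yᶜ.ncard % 2 = 0 := by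
  obtain ⟨Z, hZ1, hZ2, hZ3, hZ4⟩ := chain_lemma hA hT hX3 Yᶜ.ncard Y hXY hYind rfl
  by_cases h1 : Zᶜ.ncard = 1
  · obtain ⟨z, hz⟩ := Set.ncard_eq_one.mp h1
    exfalso
    have hZeq : Z = ({z}ᶜ : Set V) := by
      rw [← compl_compl Z, hz]
    have hzX : z ∈ X := hsupp z (hZeq ▸ hZ2)
    have hzZ : z ∈ Z := hZ1 (hXY hzX)
    have hzc : z ∈ Zᶜ := by rw [hz]; rfl
    exact hzc hzZ
  · omega
  
lemma ext_empty (hA : IsTournament A) (hT : IndecomposableOn A (Set.univ : Set V))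
    (hX3 : 3 ≤ X.ncard) (hXind : IndecomposableOn A X)
    (hsupp : ∀ x : V, IndecomposableOn A ({x}ᶜ : Set V) → x ∈ X) :
    extSet A X = ∅ := by
  rw [Set.eq_empty_iff_forall_notMem]
  intro x hx
  have h0 : Xᶜ.ncard % 2 = 0 := no_odd hA hT hX3 hsupp subset_rfl hXind
  have hind : IndecomposableOn A (X ∪ {x}) := hx.2
  have h1 : (X ∪ {x})ᶜ.ncard % 2 = 0 :=
    no_odd hA hT hX3 hsupp Set.subset_union_left hind
  have hcompl : (X ∪ {x})ᶜ = Xᶜ \ {x} := by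
    ext v; simp only [Set.mem_compl_iff, Set.mem_union, Set.mem_diff, Set.mem_singleton_iff]
    tauto
  have hmem : x ∈ Xᶜ := hx.1
  have hpos : 1 ≤ Xᶜ.ncard := (Set.ncard_pos (Set.toFinite _)).mpr ⟨x, hmem⟩
  have hc : (Xᶜ \ {x}).ncard = Xᶜ.ncard - 1 := Set.ncard_diff_singleton_of_mem hmem
  rw [hcompl, hc] at h1
  omega

lemma no_triple (hA : IsTournament A) (hT : IndecomposableOn A (Set.univ : Set V))
    (hX3 : 3 ≤ X.ncard) (hXind : IndecomposableOn A X)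
    (hsupp : ∀ x : V, IndecomposableOn A ({x}ᶜ : Set V) → x ∈ X) :
    ∀ a b c : V, a ∉ X → b ∉ X → c ∉ X → a ≠ b → a ≠ c → b ≠ c →
      ¬ IndecomposableOn A (X ∪ {a, b, c}) := by
  intro a b c ha hb hc hab hac hbc hind
  have h0 : Xᶜ.ncard % 2 = 0 := no_odd hA hT hX3 hsupp subset_rfl hXind
  have h1 : (X ∪ {a, b, c})ᶜ.ncard % 2 = 0 :=
    no_odd hA hT hX3 hsupp Set.subset_union_left hind
  have hcompl : (X ∪ {a, b, c})ᶜ = ((Xᶜ \ {a}) \ {b}) \ {c} := by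
    ext v; simp only [Set.mem_compl_iff, Set.mem_union, Set.mem_diff,
      Set.mem_insert_iff, Set.mem_singleton_iff]
    tauto
  have hc1 : (Xᶜ \ {a}).ncard = Xᶜ.ncard - 1 := Set.ncard_diff_singleton_of_mem ha
  have hb' : b ∈ Xᶜ \ {a} := ⟨hb, hab ∘ Eq.symm⟩
  have hc2 : ((Xᶜ \ {a}) \ {b}).ncard = Xᶜ.ncard - 2 := by
    rw [Set.ncard_diff_singleton_of_mem hb', hc1]; omega
  have hcmem : c ∈ (Xᶜ \ {a}) \ {b} := ⟨⟨hc, hac ∘ Eq.symm⟩, hbc ∘ Eq.symm⟩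
  have hc3 : (((Xᶜ \ {a}) \ {b}) \ {c}).ncard = Xᶜ.ncard - 3 := by
    rw [Set.ncard_diff_singleton_of_mem hcmem, hc2]; omega
  have hpos : 1 ≤ ((Xᶜ \ {a}) \ {b}).ncard := (Set.ncard_pos (Set.toFinite _)).mpr ⟨c, hcmem⟩
  rw [hcompl, hc3] at h1
  omega

end Chain

section GTL
variable {V : Type*} {A : V → V → Prop} {X : Set V}

lemma GTL (hA : IsTournament A) (hXind : IndecomposableOn A X) (hX3 : 3 ≤ X.ncard)
    (hC3 : ∀ a b c : V, a ∉ X → b ∉ X → c ∉ X → a ≠ b → a ≠ c → b ≠ c →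
      ¬ IndecomposableOn A (X ∪ {a, b, c}))
    {u p q z : V} (hu : u ∈ X) (hp : p ∈ slotSet A X u) (hq : q ∈ slotSet A X u) (hpq : p ≠ q)
    (hz : z ∉ X) (hzsl : z ∉ slotSet A X u)
    (c1 : ¬((A z u ↔ A z p) ∧ (A z u ↔ A z q)))
    (c2a : (A z u ↔ A z p) → ¬(A q u ↔ A q p))
    (c2b : (A z u ↔ A z q) → ¬(A p u ↔ A p q))
    (c2c : (A z p ↔ A z q) → ¬(A u p ↔ A u q)) : False := by
  have hzp : z ≠ p := fun h => hzsl (h ▸ hp)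
  have hzq : z ≠ q := fun h => hzsl (h ▸ hq)
  refine hC3 p q z hp.1 hq.1 hz hpq (Ne.symm hzp) (Ne.symm hzq) ?_
  intro I hI
  by_contra hnt
  set S : Set V := X ∪ {p, q, z} with hS
  have hpS : p ∈ S := Or.inr (by simp)
  have hqS : q ∈ S := Or.inr (by simp)
  have hzS : z ∈ S := Or.inr (by simp)
  have hmem : ∀ i ∈ I, i ∈ X ∨ i = p ∨ i = q ∨ i = z := by
    intro i hi
    rcases hI.1 hi with h | h
    · exact Or.inl h
    · rcases h with h | h | h
      · exact Or.inr (Or.inl h)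
      · exact Or.inr (Or.inr (Or.inl h))
      · exact Or.inr (Or.inr (Or.inr h))
  have htriv : IsTrivialOn X (I ∩ X) := hXind _ (interval_restrict hI Set.subset_union_left)
  rcases htriv with he | ⟨v, hv⟩ | he
  · -- I ∩ X = ∅
    have hnX : ∀ i ∈ I, i ∉ X := by
      intro i hi hiX
      have hm : i ∈ I ∩ X := ⟨hi, hiX⟩
      rw [he] at hm; exact hm
    have huI : u ∉ I := fun h => hnX u h hu
    by_cases hzI : z ∈ I
    · by_cases hpI : p ∈ I
      · refine hzsl (slot_of_iff hA hz hu (fun w hw hwu => ?_))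
        have hwI : w ∉ I := fun h => hnX w h hw
        have e1 : A w z ↔ A w p := interval_iff hA hI (Or.inl hw) hwI hzI hpI
        exact e1.trans (slot_iff hA hp hw hwu)
      · by_cases hqI : q ∈ I
        · refine hzsl (slot_of_iff hA hz hu (fun w hw hwu => ?_))
          have hwI : w ∉ I := fun h => hnX w h hw
          have e1 : A w z ↔ A w q := interval_iff hA hI (Or.inl hw) hwI hzI hqI
          exact e1.trans (slot_iff hA hq hw hwu)
        · obtain ⟨s, t, hs, ht, hst⟩ := two_of_nontrivial hnt
          have hsz : s = z := by
            rcases hmem s hs with h | h | h | h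
            exacts [absurd h (hnX s hs), absurd (h ▸ hs) hpI, absurd (h ▸ hs) hqI, h]
          have htz : t = z := by
            rcases hmem t ht with h | h | h | h
            exacts [absurd h (hnX t ht), absurd (h ▸ ht) hpI, absurd (h ▸ ht) hqI, h]
          exact hst (hsz.trans htz.symm)
    · by_cases hpI : p ∈ I
      · by_cases hqI : q ∈ I
        · have e1 : A z p ↔ A z q := interval_iff hA hI hzS hzI hpI hqI
          have e2 : A u p ↔ A u q := interval_iff hA hI (Or.inl hu) huI hpI hqI
          exact c2c e1 e2
        · obtain ⟨s, t, hs, ht, hst⟩ := two_of_nontrivial hnt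
          have hsz : s = p := by
            rcases hmem s hs with h | h | h | h
            exacts [absurd h (hnX s hs), h, absurd (h ▸ hs) hqI, absurd (h ▸ hs) hzI]
          have htz : t = p := by
            rcases hmem t ht with h | h | h | h
            exacts [absurd h (hnX t ht), h, absurd (h ▸ ht) hqI, absurd (h ▸ ht) hzI]
          exact hst (hsz.trans htz.symm)
      · by_cases hqI : q ∈ I
        · obtain ⟨s, t, hs, ht, hst⟩ := two_of_nontrivial hnt
          have hsz : s = q := by
            rcases hmem s hs with h | h | h | h
            exacts [absurd h (hnX s hs), absurd (h ▸ hs) hpI, h, absurd (h ▸ hs) hzI]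
          have htz : t = q := by
            rcases hmem t ht with h | h | h | h
            exacts [absurd h (hnX t ht), absurd (h ▸ ht) hpI, h, absurd (h ▸ ht) hzI]
          exact hst (hsz.trans htz.symm)
        · obtain ⟨s, t, hs, ht, hst⟩ := two_of_nontrivial hnt
          exfalso
          rcases hmem s hs with h | h | h | h
          exacts [hnX s hs h, hpI (h ▸ hs), hqI (h ▸ hs), hzI (h ▸ hs)]
  · -- I ∩ X = {v}
    have hvI : v ∈ I := by have : v ∈ I ∩ X := by rw [hv]; rfl
                           exact this.1
    have hvX : v ∈ X := by have : v ∈ I ∩ X := by rw [hv]; rfl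
                           exact this.2
    have houtX : ∀ w ∈ X, w ≠ v → w ∉ I := by
      intro w hw hwv h
      have : w ∈ I ∩ X := ⟨h, hw⟩
      rw [hv] at this; exact hwv (by simpa using this)
    by_cases hpI : p ∈ I
    · have hvu : v = u := by
        by_contra hvu
        refine no_pair_module hA hXind hX3 hu hvX (Ne.symm hvu) (fun w hw hwu hwv => ?_)
        have hwI : w ∉ I := houtX w hw hwv
        have e1 : A w v ↔ A w p := interval_iff hA hI (Or.inl hw) hwI hvI hpI
        exact (slot_iff hA hp hw hwu).symm.trans e1.symm
      subst hvu
      by_cases hzI : z ∈ I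
      · refine hzsl (slot_of_iff hA hz hu (fun w hw hwu => ?_))
        have hwI : w ∉ I := houtX w hw hwu
        exact interval_iff hA hI (Or.inl hw) hwI hzI hvI
      · by_cases hqI : q ∈ I
        · have e1 : A z v ↔ A z p := interval_iff hA hI hzS hzI hvI hpI
          have e2 : A z v ↔ A z q := interval_iff hA hI hzS hzI hvI hqI
          exact c1 ⟨e1, e2⟩
        · have e1 : A z v ↔ A z p := interval_iff hA hI hzS hzI hvI hpI
          have e2 : A q v ↔ A q p := interval_iff hA hI hqS hqI hvI hpI
          exact c2a e1 e2
    · by_cases hqI : q ∈ I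
      · have hvu : v = u := by
          by_contra hvu
          refine no_pair_module hA hXind hX3 hu hvX (Ne.symm hvu) (fun w hw hwu hwv => ?_)
          have hwI : w ∉ I := houtX w hw hwv
          have e1 : A w v ↔ A w q := interval_iff hA hI (Or.inl hw) hwI hvI hqI
          exact (slot_iff hA hq hw hwu).symm.trans e1.symm
        subst hvu
        by_cases hzI : z ∈ I
        · refine hzsl (slot_of_iff hA hz hu (fun w hw hwu => ?_))
          have hwI : w ∉ I := houtX w hw hwu
          exact interval_iff hA hI (Or.inl hw) hwI hzI hvI
        · have e1 : A z v ↔ A z q := interval_iff hA hI hzS hzI hvI hqI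
          have e2 : A p v ↔ A p q := interval_iff hA hI hpS hpI hvI hqI
          exact c2b e1 e2
      · by_cases hzI : z ∈ I
        · -- I = {v, z}
          have hzslv : z ∈ slotSet A X v := by
            refine slot_of_iff hA hz hvX (fun w hw hwv => ?_)
            exact interval_iff hA hI (Or.inl hw) (houtX w hw hwv) hzI hvI
          have hvu : v ≠ u := fun h => hzsl (h ▸ hzslv)
          have hzu : z ≠ u := fun h => hz (h ▸ hu)
          have hvp : v ≠ p := fun h => hp.1 (h ▸ hvX)
          have hvq : v ≠ q := fun h => hq.1 (h ▸ hvX)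
          have e1 : A p v ↔ A p z := interval_iff hA hI hpS hpI hvI hzI
          have e2 : A q v ↔ A q z := interval_iff hA hI hqS hqI hvI hzI
          have s1 : A v p ↔ A v u := slot_iff hA hp hvX hvu
          have s2 : A v q ↔ A v u := slot_iff hA hq hvX hvu
          have s3 : A u z ↔ A u v := slot_iff hA hzslv hu (Ne.symm hvu)
          have f1 : A z u ↔ ¬ A u z := hA.2 z u hzu
          have f2 : A v u ↔ ¬ A u v := hA.2 v u hvu
          have f3 : A z p ↔ ¬ A p z := hA.2 z p hzp
          have f4 : A v p ↔ ¬ A p v := hA.2 v p hvp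
          have f5 : A z q ↔ ¬ A q z := hA.2 z q hzq
          have f6 : A v q ↔ ¬ A q v := hA.2 v q hvq
          have g1 : A z u ↔ A v u := f1.trans ((not_congr s3).trans f2.symm)
          have g2 : A z p ↔ A v u := f3.trans (((not_congr e1.symm).trans f4.symm).trans s1)
          have g3 : A z q ↔ A v u := f5.trans (((not_congr e2.symm).trans f6.symm).trans s2)
          exact c1 ⟨g1.trans g2.symm, g1.trans g3.symm⟩
        · obtain ⟨s, t, hs, ht, hst⟩ := two_of_nontrivial hnt
          have hsv : s = v := by
            rcases hmem s hs with h | h | h | h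
            · by_contra hne; exact houtX s h hne hs
            exacts [absurd (h ▸ hs) hpI, absurd (h ▸ hs) hqI, absurd (h ▸ hs) hzI]
          have htv : t = v := by
            rcases hmem t ht with h | h | h | h
            · by_contra hne; exact houtX t h hne ht
            exacts [absurd (h ▸ ht) hpI, absurd (h ▸ ht) hqI, absurd (h ▸ ht) hzI]
          exact hst (hsv.trans htv.symm)
  · -- X ⊆ I
    have hXI : X ⊆ I := by
      intro w hw
      have hm : w ∈ I ∩ X := by rw [he]; exact hw
      exact hm.1
    have hkill : ∀ t, t ∈ slotSet A X u → t ∈ S → t ∉ I → False := by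
      intro t hts htS htI
      obtain ⟨w₀, hw₀, hw₀t⟩ := slot_beaten hA hXind hX3 hts hu
      obtain ⟨w₁, hw₁, htw₁⟩ := slot_beats hA hXind hX3 hts hu
      exact interval_kill hA hI htS htI (hXI hw₁) (hXI hw₀) htw₁ hw₀t
    by_cases hpI : p ∈ I
    · by_cases hqI : q ∈ I
      · by_cases hzI : z ∈ I
        · apply hnt
          refine Or.inr (Or.inr ?_)
          apply Set.Subset.antisymm hI.1
          rintro x (hx | hx | hx | hx)
          · exact hXI hx
          · exact hx ▸ hpI
          · exact hx ▸ hqI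
          · exact (by simpa using hx : x = z) ▸ hzI
        · have e1 : A z u ↔ A z p := interval_iff hA hI hzS hzI (hXI hu) hpI
          have e2 : A z u ↔ A z q := interval_iff hA hI hzS hzI (hXI hu) hqI
          exact c1 ⟨e1, e2⟩
      · exact hkill q hq hqS hqI
    · exact hkill p hp hpS hpI
end GTL

section B12
variable {V : Type*} {A : V → V → Prop} {X : Set V}

/-- bad top-bottom pair with a slot witness gives an indecomposable triple -/
lemma B1 (hA : IsTournament A) (hXind : IndecomposableOn A X) (hX3 : 3 ≤ X.ncard)
    (hC3 : ∀ a b c : V, a ∉ X → b ∉ X → c ∉ X → a ≠ b → a ≠ c → b ≠ c →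
      ¬ IndecomposableOn A (X ∪ {a, b, c}))
    {x y s u' : V} (hxX : x ∉ X) (hxtop : ∀ w ∈ X, A x w)
    (hyX : y ∉ X) (hybot : ∀ w ∈ X, A w y) (hyx : A y x)
    (hu' : u' ∈ X) (hs : s ∈ slotSet A X u')
    (hcond : ¬(A x s ∧ A s y)) : False := by
  have hxy : x ≠ y := Ne.symm (tne hA hyx)
  have hxs : x ≠ s := fun h => slot_not_bracket hA hXind hX3 hs hu' ⟨hs.1, Or.inl (h ▸ hxtop)⟩
  have hys : y ≠ s := fun h => slot_not_bracket hA hXind hX3 hs hu' ⟨hs.1, Or.inr (h ▸ hybot)⟩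
  obtain ⟨w₂, hw₂, -, -⟩ := mem_diff_pair hX3 x x
  refine hC3 x y s hxX hyX hs.1 hxy hxs hys ?_
  intro I hI
  by_contra hnt
  have hxS : x ∈ X ∪ {x, y, s} := Or.inr (by simp)
  have hyS : y ∈ X ∪ {x, y, s} := Or.inr (by simp)
  have hsS : s ∈ X ∪ {x, y, s} := Or.inr (by simp)
  have hmem : ∀ i ∈ I, i ∈ X ∨ i = x ∨ i = y ∨ i = s := by
    intro i hi
    rcases hI.1 hi with h | h
    · exact Or.inl h
    · rcases h with h | h | h
      exacts [Or.inr (Or.inl h), Or.inr (Or.inr (Or.inl h)), Or.inr (Or.inr (Or.inr h))]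
  have htriv : IsTrivialOn X (I ∩ X) := hXind _ (interval_restrict hI Set.subset_union_left)
  rcases htriv with he | ⟨v, hv⟩ | he
  · -- I ∩ X = ∅
    have hnX : ∀ i ∈ I, i ∉ X := by
      intro i hi hiX
      have hm : i ∈ I ∩ X := ⟨hi, hiX⟩
      rw [he] at hm; exact hm
    by_cases hsI : s ∈ I
    · by_cases hxI : x ∈ I
      · obtain ⟨w₀, hw₀, hw₀s⟩ := slot_beaten hA hXind hX3 hs hu'
        exact interval_kill hA hI (Or.inl hw₀) (fun h => hnX w₀ h hw₀) hsI hxI hw₀s (hxtop w₀ hw₀)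
      · by_cases hyI : y ∈ I
        · obtain ⟨w₁, hw₁, hsw₁⟩ := slot_beats hA hXind hX3 hs hu'
          exact interval_kill hA hI (Or.inl hw₁) (fun h => hnX w₁ h hw₁) hyI hsI
            (hybot w₁ hw₁) hsw₁
        · obtain ⟨a, b, ha, hb, hab⟩ := two_of_nontrivial hnt
          have h1 : a = s := by
            rcases hmem a ha with h | h | h | h
            exacts [absurd h (hnX a ha), absurd (h ▸ ha) hxI, absurd (h ▸ ha) hyI, h]
          have h2 : b = s := by
            rcases hmem b hb with h | h | h | h
            exacts [absurd h (hnX b hb), absurd (h ▸ hb) hxI, absurd (h ▸ hb) hyI, h]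
          exact hab (h1.trans h2.symm)
    · by_cases hxI : x ∈ I
      · by_cases hyI : y ∈ I
        · exact interval_kill hA hI (Or.inl hw₂) (fun h => hnX w₂ h hw₂) hyI hxI
            (hybot w₂ hw₂) (hxtop w₂ hw₂)
        · obtain ⟨a, b, ha, hb, hab⟩ := two_of_nontrivial hnt
          have h1 : a = x := by
            rcases hmem a ha with h | h | h | h
            exacts [absurd h (hnX a ha), h, absurd (h ▸ ha) hyI, absurd (h ▸ ha) hsI]
          have h2 : b = x := by
            rcases hmem b hb with h | h | h | h
            exacts [absurd h (hnX b hb), h, absurd (h ▸ hb) hyI, absurd (h ▸ hb) hsI]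
          exact hab (h1.trans h2.symm)
      · by_cases hyI : y ∈ I
        · obtain ⟨a, b, ha, hb, hab⟩ := two_of_nontrivial hnt
          have h1 : a = y := by
            rcases hmem a ha with h | h | h | h
            exacts [absurd h (hnX a ha), absurd (h ▸ ha) hxI, h, absurd (h ▸ ha) hsI]
          have h2 : b = y := by
            rcases hmem b hb with h | h | h | h
            exacts [absurd h (hnX b hb), absurd (h ▸ hb) hxI, h, absurd (h ▸ hb) hsI]
          exact hab (h1.trans h2.symm)
        · obtain ⟨a, b, ha, hb, hab⟩ := two_of_nontrivial hnt
          exfalso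
          rcases hmem a ha with h | h | h | h
          exacts [hnX a ha h, hxI (h ▸ ha), hyI (h ▸ ha), hsI (h ▸ ha)]
  · -- I ∩ X = {v}
    have hvI : v ∈ I := by have : v ∈ I ∩ X := by rw [hv]; rfl
                           exact this.1
    have hvX : v ∈ X := by have : v ∈ I ∩ X := by rw [hv]; rfl
                           exact this.2
    have houtX : ∀ w ∈ X, w ≠ v → w ∉ I := by
      intro w hw hwv h
      have : w ∈ I ∩ X := ⟨h, hw⟩
      rw [hv] at this; exact hwv (by simpa using this)
    by_cases hxI : x ∈ I
    · refine not_dom hA hXind hX3 hvX (fun w hw hwv => ?_)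
      have hwI : w ∉ I := houtX w hw hwv
      have e1 : A w v ↔ A w x := interval_iff hA hI (Or.inl hw) hwI hvI hxI
      have : ¬ A w x := fun h => tasym hA h (hxtop w hw)
      have hwv' : ¬ A w v := fun h => this (e1.mp h)
      exact (tflip hA hwv).mp hwv'
    · by_cases hyI : y ∈ I
      · refine not_dommed hA hXind hX3 hvX (fun w hw hwv => ?_)
        have hwI : w ∉ I := houtX w hw hwv
        have e1 : A w v ↔ A w y := interval_iff hA hI (Or.inl hw) hwI hvI hyI
        exact e1.mpr (hybot w hw)
      · by_cases hsI : s ∈ I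
        · -- I = {v, s} : x must beat s and s must beat y : contradiction with hcond
          have e1 : A x v ↔ A x s := interval_iff hA hI hxS hxI hvI hsI
          have e2 : A y v ↔ A y s := interval_iff hA hI hyS hyI hvI hsI
          have hxs' : A x s := e1.mp (hxtop v hvX)
          have hys' : ¬ A y s := fun h => tasym hA (e2.mpr h) (hybot v hvX)
          exact hcond ⟨hxs', (tflip hA hys).mp hys'⟩
        · obtain ⟨a, b, ha, hb, hab⟩ := two_of_nontrivial hnt
          have h1 : a = v := by
            rcases hmem a ha with h | h | h | h
            · by_contra hne; exact houtX a h hne ha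
            exacts [absurd (h ▸ ha) hxI, absurd (h ▸ ha) hyI, absurd (h ▸ ha) hsI]
          have h2 : b = v := by
            rcases hmem b hb with h | h | h | h
            · by_contra hne; exact houtX b h hne hb
            exacts [absurd (h ▸ hb) hxI, absurd (h ▸ hb) hyI, absurd (h ▸ hb) hsI]
          exact hab (h1.trans h2.symm)
  · -- X ⊆ I
    have hXI : X ⊆ I := by
      intro w hw
      have hm : w ∈ I ∩ X := by rw [he]; exact hw
      exact hm.1
    by_cases hsI : s ∈ I
    · by_cases hxI : x ∈ I
      · by_cases hyI : y ∈ I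
        · apply hnt
          refine Or.inr (Or.inr ?_)
          apply Set.Subset.antisymm hI.1
          rintro t (ht | ht | ht | ht)
          · exact hXI ht
          · exact ht ▸ hxI
          · exact ht ▸ hyI
          · exact (by simpa using ht : t = s) ▸ hsI
        · exact interval_kill hA hI hyS hyI hxI (hXI hw₂) hyx (hybot w₂ hw₂)
      · by_cases hyI : y ∈ I
        · exact interval_kill hA hI hxS hxI (hXI hw₂) hyI (hxtop w₂ hw₂) hyx
        · -- I = X ∪ {s}
          by_cases hxs' : A x s
          · by_cases hsy' : A s y
            · exact hcond ⟨hxs', hsy'⟩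
            · have hys' : A y s := (tflip hA (Ne.symm hys)).mp hsy'
              exact interval_kill hA hI hyS hyI hsI (hXI hw₂) hys' (hybot w₂ hw₂)
          · have hsx : A s x := (tflip hA hxs).mp hxs'
            exact interval_kill hA hI hxS hxI (hXI hw₂) hsI (hxtop w₂ hw₂) hsx
    · obtain ⟨w₀, hw₀, hw₀s⟩ := slot_beaten hA hXind hX3 hs hu'
      obtain ⟨w₁, hw₁, hsw₁⟩ := slot_beats hA hXind hX3 hs hu'
      exact interval_kill hA hI hsS hsI (hXI hw₁) (hXI hw₀) hsw₁ hw₀s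

/-- reversed slot between two tops gives an indecomposable triple -/
lemma B2 (hA : IsTournament A) (hXind : IndecomposableOn A X) (hX3 : 3 ≤ X.ncard)
    (hC3 : ∀ a b c : V, a ∉ X → b ∉ X → c ∉ X → a ≠ b → a ≠ c → b ≠ c →
      ¬ IndecomposableOn A (X ∪ {a, b, c}))
    {x₁ x₂ s u' : V} (h1X : x₁ ∉ X) (h1top : ∀ w ∈ X, A x₁ w)
    (h2X : x₂ ∉ X) (h2top : ∀ w ∈ X, A x₂ w) (h12 : A x₁ x₂)
    (hu' : u' ∈ X) (hs : s ∈ slotSet A X u')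
    (hsx1 : A s x₁) (hx2s : A x₂ s) : False := by
  have hne : x₁ ≠ x₂ := tne hA h12
  have h1s : x₁ ≠ s := fun h => slot_not_bracket hA hXind hX3 hs hu' ⟨hs.1, Or.inl (h ▸ h1top)⟩
  have h2s : x₂ ≠ s := fun h => slot_not_bracket hA hXind hX3 hs hu' ⟨hs.1, Or.inl (h ▸ h2top)⟩
  obtain ⟨w₂, hw₂, -, -⟩ := mem_diff_pair hX3 x₁ x₁
  obtain ⟨w₀, hw₀, hw₀s⟩ := slot_beaten hA hXind hX3 hs hu'
  refine hC3 x₁ x₂ s h1X h2X hs.1 hne h1s h2s ?_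
  intro I hI
  by_contra hnt
  have h1S : x₁ ∈ X ∪ {x₁, x₂, s} := Or.inr (by simp)
  have h2S : x₂ ∈ X ∪ {x₁, x₂, s} := Or.inr (by simp)
  have hsS : s ∈ X ∪ {x₁, x₂, s} := Or.inr (by simp)
  have hmem : ∀ i ∈ I, i ∈ X ∨ i = x₁ ∨ i = x₂ ∨ i = s := by
    intro i hi
    rcases hI.1 hi with h | h
    · exact Or.inl h
    · rcases h with h | h | h
      exacts [Or.inr (Or.inl h), Or.inr (Or.inr (Or.inl h)), Or.inr (Or.inr (Or.inr h))]
  have htriv : IsTrivialOn X (I ∩ X) := hXind _ (interval_restrict hI Set.subset_union_left)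
  rcases htriv with he | ⟨v, hv⟩ | he
  · -- I ∩ X = ∅
    have hnX : ∀ i ∈ I, i ∉ X := by
      intro i hi hiX
      have hm : i ∈ I ∩ X := ⟨hi, hiX⟩
      rw [he] at hm; exact hm
    by_cases hsI : s ∈ I
    · by_cases h1I : x₁ ∈ I
      · exact interval_kill hA hI (Or.inl hw₀) (fun h => hnX w₀ h hw₀) hsI h1I
          hw₀s (h1top w₀ hw₀)
      · by_cases h2I : x₂ ∈ I
        · exact interval_kill hA hI (Or.inl hw₀) (fun h => hnX w₀ h hw₀) hsI h2I
            hw₀s (h2top w₀ hw₀)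
        · obtain ⟨a, b, ha, hb, hab⟩ := two_of_nontrivial hnt
          have hh1 : a = s := by
            rcases hmem a ha with h | h | h | h
            exacts [absurd h (hnX a ha), absurd (h ▸ ha) h1I, absurd (h ▸ ha) h2I, h]
          have hh2 : b = s := by
            rcases hmem b hb with h | h | h | h
            exacts [absurd h (hnX b hb), absurd (h ▸ hb) h1I, absurd (h ▸ hb) h2I, h]
          exact hab (hh1.trans hh2.symm)
    · by_cases h1I : x₁ ∈ I
      · by_cases h2I : x₂ ∈ I
        · exact interval_kill hA hI hsS hsI h1I h2I hsx1 hx2s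
        · obtain ⟨a, b, ha, hb, hab⟩ := two_of_nontrivial hnt
          have hh1 : a = x₁ := by
            rcases hmem a ha with h | h | h | h
            exacts [absurd h (hnX a ha), h, absurd (h ▸ ha) h2I, absurd (h ▸ ha) hsI]
          have hh2 : b = x₁ := by
            rcases hmem b hb with h | h | h | h
            exacts [absurd h (hnX b hb), h, absurd (h ▸ hb) h2I, absurd (h ▸ hb) hsI]
          exact hab (hh1.trans hh2.symm)
      · by_cases h2I : x₂ ∈ I
        · obtain ⟨a, b, ha, hb, hab⟩ := two_of_nontrivial hnt
          have hh1 : a = x₂ := by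
            rcases hmem a ha with h | h | h | h
            exacts [absurd h (hnX a ha), absurd (h ▸ ha) h1I, h, absurd (h ▸ ha) hsI]
          have hh2 : b = x₂ := by
            rcases hmem b hb with h | h | h | h
            exacts [absurd h (hnX b hb), absurd (h ▸ hb) h1I, h, absurd (h ▸ hb) hsI]
          exact hab (hh1.trans hh2.symm)
        · obtain ⟨a, b, ha, hb, hab⟩ := two_of_nontrivial hnt
          exfalso
          rcases hmem a ha with h | h | h | h
          exacts [hnX a ha h, h1I (h ▸ ha), h2I (h ▸ ha), hsI (h ▸ ha)]
  · -- I ∩ X = {v}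
    have hvI : v ∈ I := by have : v ∈ I ∩ X := by rw [hv]; rfl
                           exact this.1
    have hvX : v ∈ X := by have : v ∈ I ∩ X := by rw [hv]; rfl
                           exact this.2
    have houtX : ∀ w ∈ X, w ≠ v → w ∉ I := by
      intro w hw hwv h
      have : w ∈ I ∩ X := ⟨h, hw⟩
      rw [hv] at this; exact hwv (by simpa using this)
    have hdom : ∀ t, t ∈ I → t ∉ X → (∀ w ∈ X, A t w) → False := by
      intro t htI htX htop
      refine not_dom hA hXind hX3 hvX (fun w hw hwv => ?_)
      have hwI : w ∉ I := houtX w hw hwv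
      have e1 : A w v ↔ A w t := interval_iff hA hI (Or.inl hw) hwI hvI htI
      have hnwt : ¬ A w t := fun h => tasym hA h (htop w hw)
      have hwv' : ¬ A w v := fun h => hnwt (e1.mp h)
      exact (tflip hA hwv).mp hwv'
    by_cases h1I : x₁ ∈ I
    · exact hdom x₁ h1I h1X h1top
    · by_cases h2I : x₂ ∈ I
      · exact hdom x₂ h2I h2X h2top
      · by_cases hsI : s ∈ I
        · exact interval_kill hA hI h1S h1I hvI hsI (h1top v hvX) hsx1
        · obtain ⟨a, b, ha, hb, hab⟩ := two_of_nontrivial hnt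
          have hh1 : a = v := by
            rcases hmem a ha with h | h | h | h
            · by_contra hne2; exact houtX a h hne2 ha
            exacts [absurd (h ▸ ha) h1I, absurd (h ▸ ha) h2I, absurd (h ▸ ha) hsI]
          have hh2 : b = v := by
            rcases hmem b hb with h | h | h | h
            · by_contra hne2; exact houtX b h hne2 hb
            exacts [absurd (h ▸ hb) h1I, absurd (h ▸ hb) h2I, absurd (h ▸ hb) hsI]
          exact hab (hh1.trans hh2.symm)
  · -- X ⊆ I
    have hXI : X ⊆ I := by
      intro w hw
      have hm : w ∈ I ∩ X := by rw [he]; exact hw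
      exact hm.1
    by_cases hsI : s ∈ I
    · by_cases h1I : x₁ ∈ I
      · by_cases h2I : x₂ ∈ I
        · apply hnt
          refine Or.inr (Or.inr ?_)
          apply Set.Subset.antisymm hI.1
          rintro t (ht | ht | ht | ht)
          · exact hXI ht
          · exact ht ▸ h1I
          · exact ht ▸ h2I
          · exact (by simpa using ht : t = s) ▸ hsI
        · exact interval_kill hA hI h2S h2I hsI h1I hx2s h12
      · exact interval_kill hA hI h1S h1I (hXI hw₂) hsI (h1top w₂ hw₂) hsx1
    · obtain ⟨w₁, hw₁, hsw₁⟩ := slot_beats hA hXind hX3 hs hu'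
      exact interval_kill hA hI hsS hsI (hXI hw₁) (hXI hw₀) hsw₁ hw₀s
end B12

section Slot1
variable {V : Type*} {A : V → V → Prop} {X : Set V}

/-- crossing-edge: a vertex splitting a 3-cycle forms a 3-cycle with one of its edges -/
lemma crossing (hA : IsTournament A) {p q r v : V}
    (hvp : v ≠ p) (hvq : v ≠ q) (hvr : v ≠ r)
    (hsplit : ¬((A v p ↔ A v q) ∧ (A v p ↔ A v r))) :
    ∃ s t, ((s = p ∧ t = q) ∨ (s = q ∧ t = r) ∨ (s = r ∧ t = p)) ∧ A v s ∧ A t v := by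
  by_cases h1 : A v p <;> by_cases h2 : A v q <;> by_cases h3 : A v r
  · exact absurd ⟨iff_of_true h1 h2, iff_of_true h1 h3⟩ hsplit
  · exact ⟨q, r, Or.inr (Or.inl ⟨rfl, rfl⟩), h2, (tflip hA hvr).mp h3⟩
  · exact ⟨p, q, Or.inl ⟨rfl, rfl⟩, h1, (tflip hA hvq).mp h2⟩
  · exact ⟨p, q, Or.inl ⟨rfl, rfl⟩, h1, (tflip hA hvq).mp h2⟩
  · exact ⟨r, p, Or.inr (Or.inr ⟨rfl, rfl⟩), h3, (tflip hA hvp).mp h1⟩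
  · exact ⟨q, r, Or.inr (Or.inl ⟨rfl, rfl⟩), h2, (tflip hA hvr).mp h3⟩
  · exact ⟨r, p, Or.inr (Or.inr ⟨rfl, rfl⟩), h3, (tflip hA hvp).mp h1⟩
  · exact absurd ⟨iff_of_false h1 h2, iff_of_false h1 h3⟩ hsplit

lemma tri_iff_mem {v p q r s t : V} (h1 : A v p ↔ A v q) (h2 : A v p ↔ A v r)
    (hs : s = p ∨ s = q ∨ s = r) (ht : t = p ∨ t = q ∨ t = r) : A v s ↔ A v t := by
  rcases hs with rfl | rfl | rfl <;> rcases ht with rfl | rfl | rfl <;> tauto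

variable (hA : IsTournament A) (hXind : IndecomposableOn A X) (hX3 : 3 ≤ X.ncard)
  (hC3 : ∀ a b c : V, a ∉ X → b ∉ X → c ∉ X → a ≠ b → a ≠ c → b ≠ c →
      ¬ IndecomposableOn A (X ∪ {a, b, c}))

include hA hXind hX3 hC3

/-- outside vertices are uniform on triangles through u -/
lemma zunif_cycle_u {u p q z : V} (hu : u ∈ X)
    (hp : p ∈ slotSet A X u) (hq : q ∈ slotSet A X u)
    (hup : A u p) (hpq : A p q) (hqu : A q u)
    (hz : z ∉ X) (hzsl : z ∉ slotSet A X u) :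
    (A z u ↔ A z p) ∧ (A z u ↔ A z q) := by
  by_contra c1
  refine GTL hA hXind hX3 hC3 hu hp hq (tne hA hpq) hz hzsl c1 ?_ ?_ ?_
  · intro _ hiff
    exact tasym hA hpq (hiff.mp hqu)
  · intro _ hiff
    exact tasym hA hup (hiff.mpr hpq)
  · intro _ hiff
    exact tasym hA (hiff.mp hup) hqu

/-- the chase : z beats exactly `a` in a slot 3-cycle `a→b→c→a` : impossible -/
lemma chase1 {u a b c z : V} (hu : u ∈ X)
    (ha : a ∈ slotSet A X u) (hb : b ∈ slotSet A X u) (hc : c ∈ slotSet A X u)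
    (hab : A a b) (hbc : A b c) (hca : A c a)
    (hz : z ∉ X) (hzsl : z ∉ slotSet A X u)
    (hza : A z a) (hzb : ¬ A z b) (hzc : ¬ A z c) : False := by
  have hza' : z ≠ a := fun h => hzsl (h ▸ ha)
  have hzb' : z ≠ b := fun h => hzsl (h ▸ hb)
  have hzc' : z ≠ c := fun h => hzsl (h ▸ hc)
  have hzu : z ≠ u := fun h => hz (h ▸ hu)
  by_cases ht : A z u
  · by_cases hub : A u b
    · by_cases huc : A u c
      · -- GTL (a,c)
        refine GTL hA hXind hX3 hC3 hu ha hc (fun h => hzc (h ▸ hza)) hz hzsl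
          (fun hh => hzc (hh.2.mp ht)) ?_ ?_ ?_
        · intro _ hiff; exact tasym hA huc (hiff.mpr hca)
        · intro hiff; exact absurd (hiff.mp ht) hzc
        · intro hiff; exact absurd (hiff.mp hza) hzc
      · -- A c u : GTL (b,c)
        have hcu : A c u := (tflip hA (show u ≠ c from fun h => hc.1 (by rw [← h]; exact hu))).mp huc
        refine GTL hA hXind hX3 hC3 hu hb hc (tne hA hbc) hz hzsl
          (fun hh => hzb (hh.1.mp ht)) ?_ ?_ ?_
        · intro hiff; exact absurd (hiff.mp ht) hzb
        · intro hiff; exact absurd (hiff.mp ht) hzc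
        · intro _ hiff; exact absurd (hiff.mp hub) huc
    · -- A b u : GTL (a,b)
      have hbu : A b u := (tflip hA (show u ≠ b from fun h => hb.1 (by rw [← h]; exact hu))).mp hub
      refine GTL hA hXind hX3 hC3 hu ha hb (tne hA hab) hz hzsl
        (fun hh => hzb (hh.2.mp ht)) ?_ ?_ ?_
      · intro _ hiff; exact tasym hA hab (hiff.mp hbu)
      · intro hiff; exact absurd (hiff.mp ht) hzb
      · intro hiff; exact absurd (hiff.mp hza) hzb
  · by_cases hua : A u a
    · -- GTL (a,b) via c2b
      refine GTL hA hXind hX3 hC3 hu ha hb (tne hA hab) hz hzsl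
        (fun hh => ht (hh.1.mpr hza)) ?_ ?_ ?_
      · intro hiff; exact absurd (hiff.mpr hza) ht
      · intro _ hiff; exact tasym hA hua (hiff.mpr hab)
      · intro hiff; exact absurd (hiff.mp hza) hzb
    · -- A a u : GTL (a,c)
      have hau : A a u := (tflip hA (show u ≠ a from fun h => ha.1 (by rw [← h]; exact hu))).mp hua
      refine GTL hA hXind hX3 hC3 hu ha hc (fun h => hzc (h ▸ hza)) hz hzsl
        (fun hh => ht (hh.1.mpr hza)) ?_ ?_ ?_
      · intro hiff; exact absurd (hiff.mpr hza) ht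
      · intro _ hiff; exact tasym hA (hiff.mp hau) hca
      · intro hiff; exact absurd (hiff.mp hza) hzc

/-- the chase : z beats exactly `a` and `b` in a slot 3-cycle `a→b→c→a` : impossible -/
lemma chase2 {u a b c z : V} (hu : u ∈ X)
    (ha : a ∈ slotSet A X u) (hb : b ∈ slotSet A X u) (hc : c ∈ slotSet A X u)
    (hab : A a b) (hbc : A b c) (hca : A c a)
    (hz : z ∉ X) (hzsl : z ∉ slotSet A X u)
    (hza : A z a) (hzb : A z b) (hzc : ¬ A z c) : False := by
  by_cases ht : A z u
  · by_cases hcu : A c u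
    · -- GTL (b,c)
      refine GTL hA hXind hX3 hC3 hu hb hc (tne hA hbc) hz hzsl
        (fun hh => hzc (hh.2.mp ht)) ?_ ?_ ?_
      · intro _ hiff; exact tasym hA hbc (hiff.mp hcu)
      · intro hiff; exact absurd (hiff.mp ht) hzc
      · intro hiff; exact absurd (hiff.mp hzb) hzc
    · -- A u c : GTL (a,c)
      have huc : A u c := (tflip hA (show c ≠ u from fun h => hc.1 (by rw [h]; exact hu))).mp hcu
      refine GTL hA hXind hX3 hC3 hu ha hc (fun h => hzc (h ▸ hza)) hz hzsl
        (fun hh => hzc (hh.2.mp ht)) ?_ ?_ ?_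
      · intro _ hiff; exact tasym hA huc (hiff.mpr hca)
      · intro hiff; exact absurd (hiff.mp ht) hzc
      · intro hiff; exact absurd (hiff.mp hza) hzc
  · by_cases hua : A u a
    · by_cases hub : A u b
      · -- GTL (b,c)
        refine GTL hA hXind hX3 hC3 hu hb hc (tne hA hbc) hz hzsl
          (fun hh => ht (hh.1.mpr hzb)) ?_ ?_ ?_
        · intro hiff; exact absurd (hiff.mpr hzb) ht
        · intro _ hiff; exact tasym hA hub (hiff.mpr hbc)
        · intro hiff; exact absurd (hiff.mp hzb) hzc
      · -- A b u : GTL (a,b)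
        have hbu : A b u := (tflip hA (show u ≠ b from fun h => hb.1 (by rw [← h]; exact hu))).mp hub
        refine GTL hA hXind hX3 hC3 hu ha hb (tne hA hab) hz hzsl
          (fun hh => ht (hh.1.mpr hza)) ?_ ?_ ?_
        · intro hiff; exact absurd (hiff.mpr hza) ht
        · intro hiff; exact absurd (hiff.mpr hzb) ht
        · intro _ hiff; exact absurd (hiff.mp hua) (fun h => tasym hA h hbu)
    · -- A a u : GTL (a,c)
      have hau : A a u := (tflip hA (show u ≠ a from fun h => ha.1 (by rw [← h]; exact hu))).mp hua
      refine GTL hA hXind hX3 hC3 hu ha hc (fun h => hzc (h ▸ hza)) hz hzsl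
        (fun hh => ht (hh.1.mpr hza)) ?_ ?_ ?_
      · intro hiff; exact absurd (hiff.mpr hza) ht
      · intro _ hiff; exact tasym hA (hiff.mp hau) hca
      · intro hiff; exact absurd (hiff.mp hza) hzc

/-- outside vertices are uniform on slot-only triangles -/
lemma zunif_cycle_slots {u a b c z : V} (hu : u ∈ X)
    (ha : a ∈ slotSet A X u) (hb : b ∈ slotSet A X u) (hc : c ∈ slotSet A X u)
    (hab : A a b) (hbc : A b c) (hca : A c a)
    (hz : z ∉ X) (hzsl : z ∉ slotSet A X u) :
    (A z a ↔ A z b) ∧ (A z a ↔ A z c) := by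
  by_cases h1 : A z a <;> by_cases h2 : A z b <;> by_cases h3 : A z c
  · exact ⟨iff_of_true h1 h2, iff_of_true h1 h3⟩
  · exact absurd (chase2 hA hXind hX3 hC3 hu ha hb hc hab hbc hca hz hzsl h1 h2 h3) id
  · exact absurd (chase2 hA hXind hX3 hC3 hu hc ha hb hca hab hbc hz hzsl h3 h1 h2) id
  · exact absurd (chase1 hA hXind hX3 hC3 hu ha hb hc hab hbc hca hz hzsl h1 h2 h3) id
  · exact absurd (chase2 hA hXind hX3 hC3 hu hb hc ha hbc hca hab hz hzsl h2 h3 h1) id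
  · exact absurd (chase1 hA hXind hX3 hC3 hu hb hc ha hbc hca hab hz hzsl h2 h3 h1) id
  · exact absurd (chase1 hA hXind hX3 hC3 hu hc ha hb hca hab hbc hz hzsl h3 h1 h2) id
  · exact ⟨iff_of_false h1 h2, iff_of_false h1 h3⟩

/-- outside vertices are uniform on any triangle of W = {u} ∪ X(u) -/
lemma zunif_triangle {u p q r z : V} (hu : u ∈ X)
    (hpW : p ∈ insert u (slotSet A X u)) (hqW : q ∈ insert u (slotSet A X u))
    (hrW : r ∈ insert u (slotSet A X u))
    (hpq : A p q) (hqr : A q r) (hrp : A r p)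
    (hz : z ∉ X) (hzsl : z ∉ slotSet A X u) :
    (A z p ↔ A z q) ∧ (A z p ↔ A z r) := by
  rcases hpW with heq | hpS
  · -- p = u
    rw [heq] at hpq hrp ⊢
    have hqS : q ∈ slotSet A X u := by
      rcases hqW with heq2 | h
      · rw [heq2] at hpq; exact absurd hpq (hA.1 _)
      · exact h
    have hrS : r ∈ slotSet A X u := by
      rcases hrW with heq2 | h
      · rw [heq2] at hrp; exact absurd hrp (hA.1 _)
      · exact h
    exact zunif_cycle_u hA hXind hX3 hC3 hu hqS hrS hpq hqr hrp hz hzsl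
  · rcases hqW with heq | hqS
    · -- q = u
      rw [heq] at hpq hqr ⊢
      have hrS : r ∈ slotSet A X u := by
        rcases hrW with heq2 | h
        · rw [heq2] at hqr; exact absurd hqr (hA.1 _)
        · exact h
      obtain ⟨g1, g2⟩ := zunif_cycle_u hA hXind hX3 hC3 hu hrS hpS hqr hrp hpq hz hzsl
      exact ⟨g2.symm, g2.symm.trans g1⟩
    · rcases hrW with heq | hrS
      · -- r = u
        rw [heq] at hqr hrp ⊢
        obtain ⟨g1, g2⟩ := zunif_cycle_u hA hXind hX3 hC3 hu hpS hqS hrp hpq hqr hz hzsl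
        exact ⟨g1.symm.trans g2, g1.symm⟩
      · exact zunif_cycle_slots hA hXind hX3 hC3 hu hpS hqS hrS hpq hqr hrp hz hzsl
end Slot1

section Slot2
variable {V : Type*} {A : V → V → Prop} {X : Set V}

lemma slot_no_cycle (hA : IsTournament A) (hT : IndecomposableOn A (Set.univ : Set V))
    (hXind : IndecomposableOn A X) (hX3 : 3 ≤ X.ncard)
    (hC3 : ∀ a b c : V, a ∉ X → b ∉ X → c ∉ X → a ≠ b → a ≠ c → b ≠ c →
      ¬ IndecomposableOn A (X ∪ {a, b, c}))
    {u a b c : V} (hu : u ∈ X)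
    (haW : a ∈ insert u (slotSet A X u)) (hbW : b ∈ insert u (slotSet A X u))
    (hcW : c ∈ insert u (slotSet A X u))
    (hab : A a b) (hbc : A b c) (hca : A c a) : False := by
  classical
  set W : Set V := insert u (slotSet A X u) with hWdef
  set E : V → V → Prop := fun s t => ∃ p q r, p ∈ W ∧ q ∈ W ∧ r ∈ W ∧
    A p q ∧ A q r ∧ A r p ∧ (s = p ∨ s = q ∨ s = r) ∧ (t = p ∨ t = q ∨ t = r) with hEdef
  set U : Set V := {t | Relation.ReflTransGen E a t} with hUdef
  have hEW : ∀ {s t : V}, E s t → s ∈ W ∧ t ∈ W := by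
    rintro s t ⟨p, q, r, hp, hq, hr, -, -, -, hs, ht⟩
    constructor
    · rcases hs with rfl | rfl | rfl <;> assumption
    · rcases ht with rfl | rfl | rfl <;> assumption
  have hUstep : ∀ {s w : V}, s ∈ U → E s w → w ∈ U := by
    intro s w hs hE
    exact Relation.ReflTransGen.tail hs hE
  have haU : a ∈ U := Relation.ReflTransGen.refl
  have hbU : b ∈ U :=
    Relation.ReflTransGen.single
      ⟨a, b, c, haW, hbW, hcW, hab, hbc, hca, Or.inl rfl, Or.inr (Or.inl rfl)⟩
  have hUW : U ⊆ W := by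
    intro t ht
    have ht' : Relation.ReflTransGen E a t := ht
    induction ht' with
    | refl => exact haW
    | tail h1 h2 ih => exact (hEW h2).2
  have path_unif : ∀ v : V, (∀ s t : V, s ∈ U → E s t → (A v s ↔ A v t)) →
      ∀ t ∈ U, (A v t ↔ A v a) := by
    intro v hstep t ht
    have ht' : Relation.ReflTransGen E a t := ht
    clear ht
    induction ht' with
    | refl => exact Iff.rfl
    | tail h1 h2 ih => exact ((hstep _ _ h1 h2).symm.trans ih)
  have hUint : IsIntervalOn A (Set.univ : Set V) U := by
    refine ⟨Set.subset_univ _, fun x hx => ?_⟩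
    have hxU : x ∉ U := hx.2
    have hne : ∀ i ∈ U, i ≠ x := fun i hi h => hxU (h ▸ hi)
    have hstep : ∀ s t : V, s ∈ U → E s t → (A x s ↔ A x t) := by
      intro s t hsU hEst
      obtain ⟨p, q, r, hpW, hqW, hrW, hpq, hqr, hrp, hs, ht⟩ := hEst
      have hpU : p ∈ U := hUstep hsU ⟨p, q, r, hpW, hqW, hrW, hpq, hqr, hrp, hs, Or.inl rfl⟩
      have hqU : q ∈ U := hUstep hsU
        ⟨p, q, r, hpW, hqW, hrW, hpq, hqr, hrp, hs, Or.inr (Or.inl rfl)⟩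
      have hrU : r ∈ U := hUstep hsU
        ⟨p, q, r, hpW, hqW, hrW, hpq, hqr, hrp, hs, Or.inr (Or.inr rfl)⟩
      have hxp : x ≠ p := fun h => hxU (h ▸ hpU)
      have hxq : x ≠ q := fun h => hxU (h ▸ hqU)
      have hxr : x ≠ r := fun h => hxU (h ▸ hrU)
      have hunif : (A x p ↔ A x q) ∧ (A x p ↔ A x r) := by
        by_cases hxW : x ∈ W
        · by_contra hsplit
          obtain ⟨s', t', hedge, hxs', ht'x⟩ := crossing hA hxp hxq hxr hsplit
          have hs'W : s' ∈ W := by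
            rcases hedge with ⟨rfl, rfl⟩ | ⟨rfl, rfl⟩ | ⟨rfl, rfl⟩ <;> assumption
          have ht'W : t' ∈ W := by
            rcases hedge with ⟨rfl, rfl⟩ | ⟨rfl, rfl⟩ | ⟨rfl, rfl⟩ <;> assumption
          have hs't' : A s' t' := by
            rcases hedge with ⟨rfl, rfl⟩ | ⟨rfl, rfl⟩ | ⟨rfl, rfl⟩ <;> assumption
          have hs'U : s' ∈ U := by
            rcases hedge with ⟨rfl, rfl⟩ | ⟨rfl, rfl⟩ | ⟨rfl, rfl⟩ <;> assumption
          exact hxU (hUstep hs'U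
            ⟨x, s', t', hxW, hs'W, ht'W, hxs', hs't', ht'x,
              Or.inr (Or.inl rfl), Or.inl rfl⟩)
        · by_cases hxX : x ∈ X
          · have hxu : x ≠ u := fun h => hxW (h ▸ Set.mem_insert u _)
            have key : ∀ w ∈ W, A x w ↔ A x u := by
              rintro w (rfl | hw)
              · exact Iff.rfl
              · exact slot_iff hA hw hxX hxu
            exact ⟨(key p hpW).trans (key q hqW).symm, (key p hpW).trans (key r hrW).symm⟩
          · have hxsl : x ∉ slotSet A X u := fun h => hxW (Set.mem_insert_iff.mpr (Or.inr h))
            exact zunif_triangle hA hXind hX3 hC3 hu hpW hqW hrW hpq hqr hrp hxX hxsl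
      exact tri_iff_mem hunif.1 hunif.2 hs ht
    exact unif_or hA haU hne (fun i hi => path_unif x hstep i hi)
  rcases hT U hUint with he | ⟨v, hv⟩ | he
  · rw [Set.eq_empty_iff_forall_notMem] at he
    exact he a haU
  · have h1 : a = v := by rw [hv] at haU; simpa using haU
    have h2 : b = v := by rw [hv] at hbU; simpa using hbU
    exact (tne hA hab) (h1.trans h2.symm)
  · obtain ⟨w, hw, hwu, -⟩ := mem_diff_pair hX3 u u
    have hwU : w ∈ U := by rw [he]; trivial
    rcases hUW hwU with heq | hsl
    · exact hwu heq
    · exact hsl.1 hw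
end Slot2

section Flip
variable {V : Type*} {A : V → V → Prop}

lemma flip_tournament (hA : IsTournament A) : IsTournament (fun x y => A y x) :=
  ⟨hA.1, fun x y h => hA.2 y x (Ne.symm h)⟩

lemma flip_interval {S I : Set V} :
    IsIntervalOn (fun x y => A y x) S I ↔ IsIntervalOn A S I := by
  constructor <;> (rintro ⟨h1, h2⟩; exact ⟨h1, fun x hx => (h2 x hx).symm⟩)

lemma flip_indec {S : Set V} :
    IndecomposableOn (fun x y => A y x) S ↔ IndecomposableOn A S :=
  ⟨fun h I hI => h I (flip_interval.mpr hI), fun h I hI => h I (flip_interval.mp hI)⟩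

lemma flip_slot {X : Set V} {u : V} :
    slotSet (fun x y => A y x) X u = slotSet A X u := by
  ext x
  unfold slotSet
  simp only [Set.mem_setOf_eq]
  rw [flip_interval]

lemma flip_bracket {X : Set V} :
    bracketSet (fun x y => A y x) X = bracketSet A X := by
  ext x
  unfold bracketSet
  simp only [Set.mem_setOf_eq]
  tauto
end Flip

section Bracket1
variable {V : Type*} {A : V → V → Prop} {X : Set V}

/-- no bottom vertex beats a top vertex -/
lemma noBad (hA : IsTournament A) (hT : IndecomposableOn A (Set.univ : Set V))
    (hXind : IndecomposableOn A X) (hX3 : 3 ≤ X.ncard)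
    (hC3 : ∀ a b c : V, a ∉ X → b ∉ X → c ∉ X → a ≠ b → a ≠ c → b ≠ c →
      ¬ IndecomposableOn A (X ∪ {a, b, c}))
    (hpart : ∀ z, z ∉ X → z ∈ bracketSet A X ∨ ∃ u ∈ X, z ∈ slotSet A X u)
    {x y : V} (hx : x ∉ X) (hxt : ∀ w ∈ X, A x w)
    (hy : y ∉ X) (hyb : ∀ w ∈ X, A w y) (hbad : A y x) : False := by
  classical
  obtain ⟨w₂, hw₂, -, -⟩ := mem_diff_pair hX3 x x
  set SL : Set V := {s | ∃ u ∈ X, s ∈ slotSet A X u} with hSLdef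
  -- F1 : bad pairs dominate/are dominated by all slots
  have F1 : ∀ w yy : V, w ∉ X → (∀ v ∈ X, A w v) → yy ∉ X → (∀ v ∈ X, A v yy) → A yy w →
      ∀ s ∈ SL, A w s ∧ A s yy := by
    intro w yy hwX hwt hyyX hyyb hbadwy s hsSL
    obtain ⟨u, hu, hs⟩ := hsSL
    by_contra hc
    exact B1 hA hXind hX3 hC3 hwX hwt hyyX hyyb hbadwy hu hs hc
  by_cases hSLne : SL.Nonempty
  · set P : Set V := {w | w ∉ X ∧ (∀ v ∈ X, A w v) ∧ ∃ s ∈ SL, A s w} with hPdef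
    set Q : Set V := {w | w ∉ X ∧ (∀ v ∈ X, A v w) ∧ ∃ s ∈ SL, A w s} with hQdef
    set K : Set V := ((X ∪ SL) ∪ P) ∪ Q with hKdef
    have hxSL : ∀ s ∈ SL, A x s := fun s hs => (F1 x y hx hxt hy hyb hbad s hs).1
    have hxK : x ∉ K := by
      rintro (((hx' | hs) | hp) | hq)
      · exact hx hx'
      · obtain ⟨u, hu, hsl⟩ := hs
        exact slot_not_bracket hA hXind hX3 hsl hu ⟨hx, Or.inl hxt⟩
      · obtain ⟨-, -, s, hsSL, hsx⟩ := hp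
        exact tasym hA (hxSL s hsSL) hsx
      · obtain ⟨-, hq2, -⟩ := hq
        exact tasym hA (hxt w₂ hw₂) (hq2 w₂ hw₂)
    have hKint : IsIntervalOn A (Set.univ : Set V) K := by
      refine ⟨Set.subset_univ _, fun t ht => ?_⟩
      have htK : t ∉ K := ht.2
      have htX : t ∉ X := fun h => htK (Or.inl (Or.inl (Or.inl h)))
      have htSL : t ∉ SL := fun h => htK (Or.inl (Or.inl (Or.inr h)))
      have htP : t ∉ P := fun h => htK (Or.inl (Or.inr h))
      have htQ : t ∉ Q := fun h => htK (Or.inr h)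
      rcases hpart t htX with hbr | ⟨u, hu, hsl⟩
      · rcases hbr.2 with htop | hbot
        · -- t is a top vertex outside P
          have htS : ∀ s ∈ SL, A t s := by
            intro s hsSL
            by_contra hns
            have hts : t ≠ s := by
              rintro rfl
              obtain ⟨u₁, hu₁, hsl₁⟩ := hsSL
              exact slot_not_bracket hA hXind hX3 hsl₁ hu₁ ⟨htX, Or.inl htop⟩
            have hst : A s t := (tflip hA hts).mp hns
            exact htP ⟨htX, htop, s, hsSL, hst⟩
          refine Or.inl (fun i hi => ?_)
          rcases hi with ((hiX | hiSL) | hiP) | hiQ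
          · exact htop i hiX
          · exact htS i hiSL
          · obtain ⟨hiX2, hitop, s₁, hs₁SL, hs₁i⟩ := hiP
            by_contra hnt2
            have hit : A i t := (tflip hA (show t ≠ i from fun h => htP (by rw [h]; exact ⟨hiX2, hitop, s₁, hs₁SL, hs₁i⟩))).mp hnt2
            obtain ⟨u₁, hu₁, hsl₁⟩ := hs₁SL
            exact B2 hA hXind hX3 hC3 hiX2 hitop htX htop hit hu₁ hsl₁ hs₁i
              (htS s₁ ⟨u₁, hu₁, hsl₁⟩)
          · obtain ⟨hiX2, hibot, s₂, hs₂SL, his₂⟩ := hiQ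
            by_contra hnt2
            have hti : t ≠ i := by
              rintro rfl
              exact tasym hA (htop w₂ hw₂) (hibot w₂ hw₂)
            have hit : A i t := (tflip hA hti).mp hnt2
            have := (F1 t i htX htop hiX2 hibot hit s₂ hs₂SL).2
            exact tasym hA this his₂
        · -- t is a bottom vertex outside Q
          have hSt : ∀ s ∈ SL, A s t := by
            intro s hsSL
            by_contra hns
            have hst : s ≠ t := by
              rintro rfl
              obtain ⟨u₁, hu₁, hsl₁⟩ := hsSL
              exact slot_not_bracket hA hXind hX3 hsl₁ hu₁ ⟨htX, Or.inr hbot⟩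
            have hts : A t s := (tflip hA hst).mp hns
            exact htQ ⟨htX, hbot, s, hsSL, hts⟩
          refine Or.inr (fun i hi => ?_)
          rcases hi with ((hiX | hiSL) | hiP) | hiQ
          · exact hbot i hiX
          · exact hSt i hiSL
          · obtain ⟨hiX2, hitop, s₁, hs₁SL, hs₁i⟩ := hiP
            by_contra hnt2
            have hit : t ≠ i := by
              rintro rfl
              exact tasym hA (hitop w₂ hw₂) (hbot w₂ hw₂)
            have hti : A t i := (tflip hA (fun h => hit h.symm)).mp hnt2
            have := (F1 i t hiX2 hitop htX hbot hti s₁ hs₁SL).1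
            exact tasym hA this hs₁i
          · obtain ⟨hiX2, hibot, s₂, hs₂SL, his₂⟩ := hiQ
            by_contra hnt2
            have hti : A t i := (tflip hA (show i ≠ t from fun h => htQ (by rw [← h]; exact ⟨hiX2, hibot, s₂, hs₂SL, his₂⟩))).mp hnt2
            obtain ⟨u₂, hu₂, hsl₂⟩ := hs₂SL
            -- apply B2 to the reversed tournament
            have hA' := flip_tournament hA
            have hXind' : IndecomposableOn (fun a b => A b a) X := flip_indec.mpr hXind
            have hC3' : ∀ a b c : V, a ∉ X → b ∉ X → c ∉ X → a ≠ b → a ≠ c → b ≠ c →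
                ¬ IndecomposableOn (fun a b => A b a) (X ∪ {a, b, c}) := by
              intro a b c h1 h2 h3 h4 h5 h6 hcon
              exact hC3 a b c h1 h2 h3 h4 h5 h6 (flip_indec.mp hcon)
            have hsl₂' : s₂ ∈ slotSet (fun a b => A b a) X u₂ := by
              rw [flip_slot]; exact hsl₂
            exact B2 hA' hXind' hX3 hC3' hiX2 (fun w hw => hibot w hw) htX
              (fun w hw => hbot w hw) hti hu₂ hsl₂' his₂ (hSt s₂ ⟨u₂, hu₂, hsl₂⟩)
      · exact absurd ⟨u, hu, hsl⟩ htSL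
    rcases hT K hKint with he | ⟨v, hv⟩ | he
    · have : w₂ ∈ K := Or.inl (Or.inl (Or.inl hw₂))
      rw [he] at this; exact this
    · obtain ⟨w, w', hw, hw', -, -, hww'⟩ := two_mem_diff hX3 x
      have h1 : w = v := by
        have : w ∈ K := Or.inl (Or.inl (Or.inl hw))
        rw [hv] at this; simpa using this
      have h2 : w' = v := by
        have : w' ∈ K := Or.inl (Or.inl (Or.inl hw'))
        rw [hv] at this; simpa using this
      exact hww' (h1.trans h2.symm)
    · exact hxK (by rw [he]; trivial)
  · -- no slots at all : X is a module
    have hXint : IsIntervalOn A (Set.univ : Set V) X := by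
      refine ⟨Set.subset_univ _, fun t ht => ?_⟩
      rcases hpart t ht.2 with hbr | ⟨u, hu, hsl⟩
      · rcases hbr.2 with h | h
        · exact Or.inl h
        · exact Or.inr h
      · exact absurd ⟨u, hu, hsl⟩ (fun hh => hSLne ⟨t, hh⟩)
    rcases hT X hXint with he | ⟨v, hv⟩ | he
    · rw [he] at hw₂; exact hw₂
    · obtain ⟨w, w', hw, hw', -, -, hww'⟩ := two_mem_diff hX3 x
      have h1 : w = v := by rw [hv] at hw; simpa using hw
      have h2 : w' = v := by rw [hv] at hw'; simpa using hw'
      exact hww' (h1.trans h2.symm)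
    · exact hx (by rw [he]; trivial)
end Bracket1

section Bracket2
variable {V : Type*} {A : V → V → Prop} {X : Set V}

/-- no 3-cycle among top vertices -/
lemma top_no_cycle (hA : IsTournament A) (hT : IndecomposableOn A (Set.univ : Set V))
    (hXind : IndecomposableOn A X) (hX3 : 3 ≤ X.ncard)
    (hC3 : ∀ a b c : V, a ∉ X → b ∉ X → c ∉ X → a ≠ b → a ≠ c → b ≠ c →
      ¬ IndecomposableOn A (X ∪ {a, b, c}))
    (hpart : ∀ z, z ∉ X → z ∈ bracketSet A X ∨ ∃ u ∈ X, z ∈ slotSet A X u)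
    {a b c : V} (haX : a ∉ X) (hat : ∀ w ∈ X, A a w)
    (hbX : b ∉ X) (hbt : ∀ w ∈ X, A b w) (hcX : c ∉ X) (hct : ∀ w ∈ X, A c w)
    (hab : A a b) (hbc : A b c) (hca : A c a) : False := by
  classical
  set Tp : Set V := {t | t ∉ X ∧ ∀ w ∈ X, A t w} with hTpdef
  have haT : a ∈ Tp := ⟨haX, hat⟩
  have hbT : b ∈ Tp := ⟨hbX, hbt⟩
  have hcT : c ∈ Tp := ⟨hcX, hct⟩
  set E : V → V → Prop := fun s t => ∃ p q r, p ∈ Tp ∧ q ∈ Tp ∧ r ∈ Tp ∧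
    A p q ∧ A q r ∧ A r p ∧ (s = p ∨ s = q ∨ s = r) ∧ (t = p ∨ t = q ∨ t = r) with hEdef
  set U : Set V := {t | Relation.ReflTransGen E a t} with hUdef
  have hEW : ∀ {s t : V}, E s t → s ∈ Tp ∧ t ∈ Tp := by
    rintro s t ⟨p, q, r, hp, hq, hr, -, -, -, hs, ht⟩
    constructor
    · rcases hs with rfl | rfl | rfl <;> assumption
    · rcases ht with rfl | rfl | rfl <;> assumption
  have hUstep : ∀ {s w : V}, s ∈ U → E s w → w ∈ U := fun hs hE =>
    Relation.ReflTransGen.tail hs hE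
  have haU : a ∈ U := Relation.ReflTransGen.refl
  have hbU : b ∈ U :=
    Relation.ReflTransGen.single
      ⟨a, b, c, haT, hbT, hcT, hab, hbc, hca, Or.inl rfl, Or.inr (Or.inl rfl)⟩
  have hUW : U ⊆ Tp := by
    intro t ht
    have ht' : Relation.ReflTransGen E a t := ht
    clear ht
    induction ht' with
    | refl => exact haT
    | tail h1 h2 ih => exact (hEW h2).2
  have path_unif : ∀ v : V, (∀ s t : V, s ∈ U → E s t → (A v s ↔ A v t)) →
      ∀ t ∈ U, (A v t ↔ A v a) := by
    intro v hstep t ht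
    have ht' : Relation.ReflTransGen E a t := ht
    clear ht
    induction ht' with
    | refl => exact Iff.rfl
    | tail h1 h2 ih => exact ((hstep _ _ h1 h2).symm.trans ih)
  have hUint : IsIntervalOn A (Set.univ : Set V) U := by
    refine ⟨Set.subset_univ _, fun x hx => ?_⟩
    have hxU : x ∉ U := hx.2
    by_cases hxX : x ∈ X
    · -- x ∈ X is beaten by every top vertex
      exact Or.inr (fun i hi => (hUW hi).2 x hxX)
    · rcases hpart x hxX with hbr | ⟨u, hu, hsl⟩
      · rcases hbr.2 with htop | hbot
        · -- x is itself a top vertex outside U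
          have hne : ∀ i ∈ U, i ≠ x := fun i hi h => hxU (h ▸ hi)
          have hstep : ∀ s t : V, s ∈ U → E s t → (A x s ↔ A x t) := by
            intro s t hsU hEst
            obtain ⟨p, q, r, hpT, hqT, hrT, hpq, hqr, hrp, hs, ht⟩ := hEst
            have hpU : p ∈ U := hUstep hsU
              ⟨p, q, r, hpT, hqT, hrT, hpq, hqr, hrp, hs, Or.inl rfl⟩
            have hqU : q ∈ U := hUstep hsU
              ⟨p, q, r, hpT, hqT, hrT, hpq, hqr, hrp, hs, Or.inr (Or.inl rfl)⟩
            have hrU : r ∈ U := hUstep hsU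
              ⟨p, q, r, hpT, hqT, hrT, hpq, hqr, hrp, hs, Or.inr (Or.inr rfl)⟩
            have hxp : x ≠ p := fun h => hxU (h ▸ hpU)
            have hxq : x ≠ q := fun h => hxU (h ▸ hqU)
            have hxr : x ≠ r := fun h => hxU (h ▸ hrU)
            have hunif : (A x p ↔ A x q) ∧ (A x p ↔ A x r) := by
              by_contra hsplit
              obtain ⟨s', t', hedge, hxs', ht'x⟩ := crossing hA hxp hxq hxr hsplit
              have hs'T : s' ∈ Tp := by
                rcases hedge with ⟨rfl, rfl⟩ | ⟨rfl, rfl⟩ | ⟨rfl, rfl⟩ <;> assumption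
              have ht'T : t' ∈ Tp := by
                rcases hedge with ⟨rfl, rfl⟩ | ⟨rfl, rfl⟩ | ⟨rfl, rfl⟩ <;> assumption
              have hs't' : A s' t' := by
                rcases hedge with ⟨rfl, rfl⟩ | ⟨rfl, rfl⟩ | ⟨rfl, rfl⟩ <;> assumption
              have hs'U : s' ∈ U := by
                rcases hedge with ⟨rfl, rfl⟩ | ⟨rfl, rfl⟩ | ⟨rfl, rfl⟩ <;> assumption
              exact hxU (hUstep hs'U
                ⟨x, s', t', ⟨hxX, htop⟩, hs'T, ht'T, hxs', hs't', ht'x,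
                  Or.inr (Or.inl rfl), Or.inl rfl⟩)
            exact tri_iff_mem hunif.1 hunif.2 hs ht
          exact unif_or hA haU hne (fun i hi => path_unif x hstep i hi)
        · -- x is a bottom vertex : every top vertex beats it
          refine Or.inr (fun i hi => ?_)
          have hiT := hUW hi
          by_contra hni
          obtain ⟨w₂, hw₂, -, -⟩ := mem_diff_pair hX3 a a
          have hix : i ≠ x := by
            rintro rfl
            exact tasym hA (hiT.2 w₂ hw₂) (hbot w₂ hw₂)
          have hxi : A x i := (tflip hA hix).mp hni
          exact noBad hA hT hXind hX3 hC3 hpart hiT.1 hiT.2 hxX hbot hxi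
      · -- x is a slot vertex : uniform on top triangles via B2
        have hne : ∀ i ∈ U, i ≠ x := fun i hi h => hxU (h ▸ hi)
        have hstep : ∀ s t : V, s ∈ U → E s t → (A x s ↔ A x t) := by
          intro s t hsU hEst
          obtain ⟨p, q, r, hpT, hqT, hrT, hpq, hqr, hrp, hs, ht⟩ := hEst
          have hxp : x ≠ p := fun h => slot_not_bracket hA hXind hX3 hsl hu
            ⟨hxX, Or.inl (h ▸ hpT.2)⟩
          have hxq : x ≠ q := fun h => slot_not_bracket hA hXind hX3 hsl hu
            ⟨hxX, Or.inl (h ▸ hqT.2)⟩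
          have hxr : x ≠ r := fun h => slot_not_bracket hA hXind hX3 hsl hu
            ⟨hxX, Or.inl (h ▸ hrT.2)⟩
          have hunif : (A x p ↔ A x q) ∧ (A x p ↔ A x r) := by
            by_contra hsplit
            obtain ⟨s', t', hedge, hxs', ht'x⟩ := crossing hA hxp hxq hxr hsplit
            have hs'T : s' ∈ Tp := by
              rcases hedge with ⟨rfl, rfl⟩ | ⟨rfl, rfl⟩ | ⟨rfl, rfl⟩ <;> assumption
            have ht'T : t' ∈ Tp := by
              rcases hedge with ⟨rfl, rfl⟩ | ⟨rfl, rfl⟩ | ⟨rfl, rfl⟩ <;> assumption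
            have hs't' : A s' t' := by
              rcases hedge with ⟨rfl, rfl⟩ | ⟨rfl, rfl⟩ | ⟨rfl, rfl⟩ <;> assumption
            exact B2 hA hXind hX3 hC3 hs'T.1 hs'T.2 ht'T.1 ht'T.2 hs't' hu hsl hxs' ht'x
          exact tri_iff_mem hunif.1 hunif.2 hs ht
        exact unif_or hA haU hne (fun i hi => path_unif x hstep i hi)
  rcases hT U hUint with he | ⟨v, hv⟩ | he
  · rw [Set.eq_empty_iff_forall_notMem] at he
    exact he a haU
  · have h1 : a = v := by rw [hv] at haU; simpa using haU
    have h2 : b = v := by rw [hv] at hbU; simpa using hbU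
    exact (tne hA hab) (h1.trans h2.symm)
  · obtain ⟨w, hw, -, -⟩ := mem_diff_pair hX3 a a
    have hwU : w ∈ U := by rw [he]; trivial
    exact (hUW hwU).1 hw
end Bracket2

section Bracket3
variable {V : Type*} {A : V → V → Prop} {X : Set V}

lemma bracket_no_cycle (hA : IsTournament A) (hT : IndecomposableOn A (Set.univ : Set V))
    (hXind : IndecomposableOn A X) (hX3 : 3 ≤ X.ncard)
    (hC3 : ∀ a b c : V, a ∉ X → b ∉ X → c ∉ X → a ≠ b → a ≠ c → b ≠ c →
      ¬ IndecomposableOn A (X ∪ {a, b, c}))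
    (hpart : ∀ z, z ∉ X → z ∈ bracketSet A X ∨ ∃ u ∈ X, z ∈ slotSet A X u)
    {u : V} (hu : u ∈ X)
    {a b c : V} (ha : a ∈ bracketSet A X ∪ {u}) (hb : b ∈ bracketSet A X ∪ {u})
    (hc : c ∈ bracketSet A X ∪ {u})
    (hab : A a b) (hbc : A b c) (hca : A c a) : False := by
  classical
  -- flip package
  have hA' := flip_tournament hA
  have hT' : IndecomposableOn (fun x y => A y x) (Set.univ : Set V) := flip_indec.mpr hT
  have hXind' : IndecomposableOn (fun x y => A y x) X := flip_indec.mpr hXind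
  have hC3' : ∀ a b c : V, a ∉ X → b ∉ X → c ∉ X → a ≠ b → a ≠ c → b ≠ c →
      ¬ IndecomposableOn (fun x y => A y x) (X ∪ {a, b, c}) := by
    intro a b c h1 h2 h3 h4 h5 h6 hcon
    exact hC3 a b c h1 h2 h3 h4 h5 h6 (flip_indec.mp hcon)
  have hpart' : ∀ z, z ∉ X →
      z ∈ bracketSet (fun x y => A y x) X ∨ ∃ u ∈ X, z ∈ slotSet (fun x y => A y x) X u := by
    intro z hz
    rcases hpart z hz with h | ⟨v, hv, hs⟩
    · left; rw [flip_bracket]; exact h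
    · right; exact ⟨v, hv, by rw [flip_slot]; exact hs⟩
  -- class extraction
  have hcls : ∀ v, v ∈ bracketSet A X ∪ {u} →
      v = u ∨ (v ∉ X ∧ ∀ w ∈ X, A v w) ∨ (v ∉ X ∧ ∀ w ∈ X, A w v) := by
    rintro v (hv | hv)
    · rcases hv.2 with h | h
      · exact Or.inr (Or.inl ⟨hv.1, h⟩)
      · exact Or.inr (Or.inr ⟨hv.1, h⟩)
    · exact Or.inl (by simpa using hv)
  have nUT : ∀ p, p ∉ X → (∀ w ∈ X, A p w) → A u p → False :=
    fun p _ h2 harc => tasym hA harc (h2 u hu)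
  have nBU : ∀ q, q ∉ X → (∀ w ∈ X, A w q) → A q u → False :=
    fun q _ h2 harc => tasym hA harc (h2 u hu)
  have nBT : ∀ p q, p ∉ X → (∀ w ∈ X, A p w) → q ∉ X → (∀ w ∈ X, A w q) → A q p → False :=
    fun p q h1 h2 h3 h4 harc => noBad hA hT hXind hX3 hC3 hpart h1 h2 h3 h4 harc
  have botC : ∀ p q r, p ∉ X → (∀ w ∈ X, A w p) → q ∉ X → (∀ w ∈ X, A w q) →
      r ∉ X → (∀ w ∈ X, A w r) → A p q → A q r → A r p → False := by
    intro p q r h1 h2 h3 h4 h5 h6 hpq hqr hrp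
    exact top_no_cycle hA' hT' hXind' hX3 hC3' hpart' h1 (fun w hw => h2 w hw)
      h5 (fun w hw => h6 w hw) h3 (fun w hw => h4 w hw) hrp hqr hpq
  rcases hcls a ha with hau | ⟨haX, hat⟩ | ⟨haX, hab'⟩ <;>
    rcases hcls b hb with hbu | ⟨hbX, hbt⟩ | ⟨hbX, hbb⟩ <;>
      rcases hcls c hc with hcu | ⟨hcX, hct⟩ | ⟨hcX, hcb⟩
  · rw [hau, hbu] at hab; exact hA.1 u hab
  · rw [hau, hbu] at hab; exact hA.1 u hab
  · rw [hau, hbu] at hab; exact hA.1 u hab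
  · rw [hau] at hab; exact nUT b hbX hbt hab
  · rw [hau] at hab; exact nUT b hbX hbt hab
  · rw [hau] at hab; exact nUT b hbX hbt hab
  · rw [hcu] at hbc; exact nBU b hbX hbb hbc
  · exact nBT c b hcX hct hbX hbb hbc
  · rw [hau] at hca; exact nBU c hcX hcb hca
  · rw [hbu, hcu] at hbc; exact hA.1 u hbc
  · rw [hbu] at hbc; exact nUT c hcX hct hbc
  · exact nBT a c haX hat hcX hcb hca
  · rw [hcu] at hca; exact nUT a haX hat hca
  · exact top_no_cycle hA hT hXind hX3 hC3 hpart haX hat hbX hbt hcX hct hab hbc hca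
  · exact nBT a c haX hat hcX hcb hca
  · rw [hcu] at hbc; exact nBU b hbX hbb hbc
  · exact nBT c b hcX hct hbX hbb hbc
  · exact nBT a c haX hat hcX hcb hca
  · rw [hbu] at hab; exact nBU a haX hab' hab
  · rw [hbu] at hab; exact nBU a haX hab' hab
  · rw [hbu] at hab; exact nBU a haX hab' hab
  · exact nBT b a hbX hbt haX hab' hab
  · exact nBT b a hbX hbt haX hab' hab
  · exact nBT b a hbX hbt haX hab' hab
  · rw [hcu] at hbc; exact nBU b hbX hbb hbc
  · exact nBT c b hcX hct hbX hbb hbc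
  · exact botC a b c haX hab' hbX hbb hcX hcb hab hbc hca
end Bracket3

theorem partially_critical_necessary' {V : Type*} [Fintype V] (A : V → V → Prop)
    (hA : IsTournament A) (hT : IndecomposableOn A (Set.univ : Set V))
    (X : Set V) (hX3 : 3 ≤ X.ncard) (hXind : IndecomposableOn A X)
    (hsupp : ∀ x : V, IndecomposableOn A ({x}ᶜ : Set V) → x ∈ X) :
    extSet A X = ∅ ∧
    ∀ u ∈ X,
      (∀ a ∈ slotSet A X u ∪ {u}, ∀ b ∈ slotSet A X u ∪ {u}, ∀ c ∈ slotSet A X u ∪ {u},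
        A a b → A b c → A a c) ∧
      (∀ a ∈ bracketSet A X ∪ {u}, ∀ b ∈ bracketSet A X ∪ {u}, ∀ c ∈ bracketSet A X ∪ {u},
        A a b → A b c → A a c) := by
  have hExt := ext_empty hA hT hX3 hXind hsupp
  have hC3 := no_triple hA hT hX3 hXind hsupp
  have hpart : ∀ z, z ∉ X → z ∈ bracketSet A X ∨ ∃ u ∈ X, z ∈ slotSet A X u := by
    intro z hz
    refine classify hA hXind hz ?_
    rw [hExt]
    exact Set.notMem_empty z
  refine ⟨hExt, fun u hu => ⟨?_, ?_⟩⟩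
  · intro a ha b hb c hc hab hbc
    by_contra hac
    have hacne : a ≠ c := by rintro rfl; exact tasym hA hab hbc
    have hca : A c a := (tflip hA hacne).mp hac
    have conv : ∀ v, v ∈ slotSet A X u ∪ {u} → v ∈ insert u (slotSet A X u) := by
      rintro v (h | h)
      · exact Or.inr h
      · exact Or.inl (by simpa using h)
    exact slot_no_cycle hA hT hXind hX3 hC3 hu (conv a ha) (conv b hb) (conv c hc) hab hbc hca
  · intro a ha b hb c hc hab hbc
    by_contra hac
    have hacne : a ≠ c := by rintro rfl; exact tasym hA hab hbc
    have hca : A c a := (tflip hA hacne).mp hac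
    exact bracket_no_cycle hA hT hXind hX3 hC3 hpart hu ha hb hc hab hbc hca

/-- If the indecomposable tournament `T` is `T[X]`-critical (every non-critical vertex lies
in `X`), then `Ext(X) = ∅` and for every `u ∈ X` the subtournaments induced on
`X(u) ∪ {u}` and on `⟨X⟩ ∪ {u}` are transitive. -/
theorem partially_critical_necessary {V : Type*} [Fintype V] (A : V → V → Prop)
    (hA : IsTournament A) (hT : IndecomposableOn A (Set.univ : Set V))
    (X : Set V) (hX3 : 3 ≤ X.ncard) (hXind : IndecomposableOn A X)
    (hsupp : ∀ x : V, IndecomposableOn A ({x}ᶜ : Set V) → x ∈ X) :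
    extSet A X = ∅ ∧
    ∀ u ∈ X,
      (∀ a ∈ slotSet A X u ∪ {u}, ∀ b ∈ slotSet A X u ∪ {u}, ∀ c ∈ slotSet A X u ∪ {u},
        A a b → A b c → A a c) ∧
      (∀ a ∈ bracketSet A X ∪ {u}, ∀ b ∈ bracketSet A X ∪ {u}, ∀ c ∈ bracketSet A X ∪ {u},
        A a b → A b c → A a c) := by
  exact partially_critical_necessary' A hA hT X hX3 hXind hsupp
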